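/- arXiv:2107.14755 — 8 statements merged into one kernel-verified Lean document; each statement's English description precedes it below -/
import Mathlib

section
/- Let K be a convex body in ℝ^(n+1) and let P = {H_y = {x : ⟨x,y⟩ = δ(y)} : y ∈ S^n} be an n-cycle of hyperplanes, where δ : S^n → ℝ is continuous and odd. Then for every (n−1)-dimensional affine subspace ℓ that meets the interior of K (an (n−1)-dimensional section of K), there exists a hyperplane Π ∈ P with ℓ ⊂ Π. -/
open scoped RealInnerProductSpace

/-- For a convex body `K` in `ℝ^{n+1}` and an `n`-cycle of hyperplanes
given by a continuous odd function `δ` on the unit sphere, every `(n-1)`-dimensional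
affine subspace meeting the interior of `K` is contained in some hyperplane of the cycle. -/
theorem stmt_0 {n : ℕ} (hn : 1 ≤ n)
    (K : Set (EuclideanSpace ℝ (Fin (n + 1))))
    (hKcomp : IsCompact K) (hKconv : Convex ℝ K) (hKint : (interior K).Nonempty)
    (δ : EuclideanSpace ℝ (Fin (n + 1)) → ℝ)
    (hδcont : ContinuousOn δ (Metric.sphere (0 : EuclideanSpace ℝ (Fin (n + 1))) 1))
    (hδodd : ∀ y ∈ Metric.sphere (0 : EuclideanSpace ℝ (Fin (n + 1))) 1, δ (-y) = -δ y)
    (ℓ : AffineSubspace ℝ (EuclideanSpace ℝ (Fin (n + 1))))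
    (hℓdim : Module.finrank ℝ ℓ.direction = n - 1)
    (hℓmeet : ((ℓ : Set (EuclideanSpace ℝ (Fin (n + 1)))) ∩ interior K).Nonempty) :
    ∃ y ∈ Metric.sphere (0 : EuclideanSpace ℝ (Fin (n + 1))) 1,
      (ℓ : Set (EuclideanSpace ℝ (Fin (n + 1)))) ⊆ {x | ⟪x, y⟫ = δ y} := by
  obtain ⟨p, hp, -⟩ := hℓmeet
  set W := ℓ.directionᗮ with hWdef
  have hdimE : Module.finrank ℝ (EuclideanSpace ℝ (Fin (n + 1))) = n + 1 :=
    finrank_euclideanSpace_fin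
  have hW : Module.finrank ℝ W = 2 := by
    have h := Submodule.finrank_add_finrank_orthogonal (K := ℓ.direction)
    rw [← hWdef, hℓdim, hdimE] at h
    omega
  have hWrank : 1 < Module.rank ℝ W := by
    rw [← Module.finrank_eq_rank, hW]
    exact_mod_cast one_lt_two
  haveI : Nontrivial W := Module.nontrivial_of_finrank_pos (R := ℝ) (by rw [hW]; norm_num)
  have hconn : IsConnected (Metric.sphere (0 : W) 1) :=
    isConnected_sphere hWrank 0 zero_le_one
  set f : W → ℝ := fun w => δ (w : EuclideanSpace ℝ (Fin (n + 1))) - ⟪p, (w : EuclideanSpace ℝ (Fin (n + 1)))⟫ with hf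
  have hmaps : Set.MapsTo (fun w : W => (w : EuclideanSpace ℝ (Fin (n + 1))))
      (Metric.sphere 0 1) (Metric.sphere 0 1) := by
    intro w hw
    simp only [Metric.mem_sphere, dist_zero_right] at hw ⊢
    rwa [Submodule.norm_coe]
  have hfcont : ContinuousOn f (Metric.sphere (0 : W) 1) := by
    apply ContinuousOn.sub
    · exact ContinuousOn.comp (g := δ) hδcont continuous_subtype_val.continuousOn hmaps
    · exact (continuous_const.inner continuous_subtype_val).continuousOn
  obtain ⟨y0, hy0⟩ : (Metric.sphere (0 : W) 1).Nonempty :=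
    NormedSpace.sphere_nonempty.mpr zero_le_one
  have hy0' : -y0 ∈ Metric.sphere (0 : W) 1 := by simpa using hy0
  have hodd : f (-y0) = - f y0 := by
    have h1 : ((-y0 : W) : EuclideanSpace ℝ (Fin (n + 1))) = -(y0 : EuclideanSpace ℝ (Fin (n + 1))) := rfl
    have h2 : ((y0 : W) : EuclideanSpace ℝ (Fin (n + 1))) ∈
        Metric.sphere (0 : EuclideanSpace ℝ (Fin (n + 1))) 1 := hmaps hy0
    simp only [hf, h1, hδodd _ h2, inner_neg_right]
    ring
  have himg : IsPreconnected (f '' Metric.sphere (0 : W) 1) :=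
    (hconn.image f hfcont).isPreconnected
  have h0 : (0 : ℝ) ∈ f '' Metric.sphere (0 : W) 1 := by
    have ha : f y0 ∈ f '' Metric.sphere (0 : W) 1 := ⟨y0, hy0, rfl⟩
    have hb : -f y0 ∈ f '' Metric.sphere (0 : W) 1 := ⟨-y0, hy0', hodd⟩
    rcases le_total (f y0) 0 with h | h
    · exact himg.Icc_subset ha hb ⟨h, by linarith⟩
    · exact himg.Icc_subset hb ha ⟨by linarith, h⟩
  obtain ⟨y, hy, hfy⟩ := h0
  refine ⟨(y : EuclideanSpace ℝ (Fin (n + 1))), hmaps hy, ?_⟩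
  intro x hx
  have hxy : ⟪x - p, (y : EuclideanSpace ℝ (Fin (n + 1)))⟫ = 0 := by
    have hmem : x - p ∈ ℓ.direction := AffineSubspace.vsub_mem_direction hx hp
    have hy2 : (y : EuclideanSpace ℝ (Fin (n + 1))) ∈ ℓ.directionᗮ := y.2
    exact (Submodule.mem_orthogonal _ _).1 hy2 (x - p) hmem
  have hxp : ⟪x, (y : EuclideanSpace ℝ (Fin (n + 1)))⟫ = ⟪p, (y : EuclideanSpace ℝ (Fin (n + 1)))⟫ := by
    have h := inner_sub_left (𝕜 := ℝ) x p (y : EuclideanSpace ℝ (Fin (n + 1)))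
    rw [hxy] at h
    linarith [h]
  simp only [hf] at hfy
  simp only [Set.mem_setOf_eq, hxp]
  linarith
end

section
/- Let δ : S^n → ℝ be continuous and odd, let ℓ be an (n−1)-dimensional affine subspace of ℝ^(n+1), let S(ℓ) = {v ∈ S^n : v ⊥ aff ℓ}, and let σ : S(ℓ) → ℝ assign to x the signed distance from a fixed point O' ∈ ℓ to the hyperplane H_x = {z : ⟨z,x⟩ = δ(x)}. Then σ is a continuous odd function on a sphere of dimension ≥ 1, and hence there exists x₀ ∈ S(ℓ) with σ(x₀) = 0, i.e., ℓ ⊂ H_{x₀}. -/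
open scoped RealInnerProductSpace

/-- Borsuk–Ulam step: for a continuous odd `δ` on `Sⁿ` and an
`(n-1)`-dimensional affine subspace `ℓ` with a chosen point `O' ∈ ℓ`, the signed
distance `σ x = ⟪O', x⟫ - δ x`, defined on the sphere `S(ℓ)` of unit vectors
orthogonal to the direction of `ℓ`, vanishes at some `x₀`; hence `ℓ ⊆ H_{x₀}`. -/
theorem stmt_1 {n : ℕ} (hn : 1 ≤ n)
    (δ : EuclideanSpace ℝ (Fin (n + 1)) → ℝ)
    (hδcont : ContinuousOn δ (Metric.sphere (0 : EuclideanSpace ℝ (Fin (n + 1))) 1))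
    (hδodd : ∀ y ∈ Metric.sphere (0 : EuclideanSpace ℝ (Fin (n + 1))) 1, δ (-y) = -δ y)
    (ℓ : AffineSubspace ℝ (EuclideanSpace ℝ (Fin (n + 1))))
    (hℓne : (ℓ : Set (EuclideanSpace ℝ (Fin (n + 1)))).Nonempty)
    (hℓdim : Module.finrank ℝ ℓ.direction = n - 1)
    (O' : EuclideanSpace ℝ (Fin (n + 1))) (hO' : O' ∈ ℓ) :
    ∃ x₀ ∈ Metric.sphere (0 : EuclideanSpace ℝ (Fin (n + 1))) 1,
      (∀ w ∈ ℓ.direction, ⟪x₀, w⟫ = 0) ∧ ⟪O', x₀⟫ - δ x₀ = 0 ∧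
      (ℓ : Set (EuclideanSpace ℝ (Fin (n + 1)))) ⊆ {z | ⟪z, x₀⟫ = δ x₀} := by
  classical
  have hdimE : Module.finrank ℝ (EuclideanSpace ℝ (Fin (n + 1))) = n + 1 := by simp
  have hsum := Submodule.finrank_add_finrank_orthogonal (K := ℓ.direction)
  rw [hdimE] at hsum
  have hKdim : Module.finrank ℝ ℓ.directionᗮ = 2 := by omega
  have hrank : 1 < Module.rank ℝ ℓ.directionᗮ := by
    have h2 : Module.rank ℝ ℓ.directionᗮ = 2 := by
      rw [← Module.finrank_eq_rank, hKdim]; norm_num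
    rw [h2]; norm_num
  have hconn : IsConnected (Metric.sphere (0 : ℓ.directionᗮ) 1) :=
    isConnected_sphere hrank 0 zero_le_one
  have : Nontrivial ℓ.directionᗮ := by
    apply Module.nontrivial_of_finrank_pos (R := ℝ); omega
  have hmap : Set.MapsTo (fun v : ℓ.directionᗮ => (v : EuclideanSpace ℝ (Fin (n + 1))))
      (Metric.sphere (0 : ℓ.directionᗮ) 1)
      (Metric.sphere (0 : EuclideanSpace ℝ (Fin (n + 1))) 1) := by
    intro v hv
    simp only [Metric.mem_sphere, dist_zero_right] at hv ⊢
    rwa [Submodule.norm_coe]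
  set f : ℓ.directionᗮ → ℝ := fun v => ⟪O', (v : EuclideanSpace ℝ (Fin (n + 1)))⟫
      - δ (v : EuclideanSpace ℝ (Fin (n + 1))) with hf
  have hfc : ContinuousOn f (Metric.sphere (0 : ℓ.directionᗮ) 1) := by
    apply ContinuousOn.sub
    · exact (Continuous.inner continuous_const continuous_subtype_val).continuousOn
    · exact hδcont.comp continuous_subtype_val.continuousOn hmap
  obtain ⟨v, hv⟩ : (Metric.sphere (0 : ℓ.directionᗮ) 1).Nonempty :=
    NormedSpace.sphere_nonempty.2 zero_le_one
  have hnegv : -v ∈ Metric.sphere (0 : ℓ.directionᗮ) 1 := by simpa using hv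
  have hodd : f (-v) = -f v := by
    have h1 : ((-v : ℓ.directionᗮ) : EuclideanSpace ℝ (Fin (n + 1))) = -(v : EuclideanSpace ℝ (Fin (n + 1))) := rfl
    simp only [hf]
    rw [h1, inner_neg_right, hδodd _ (hmap hv)]
    ring
  have hzero : ∃ v₀ ∈ Metric.sphere (0 : ℓ.directionᗮ) 1, f v₀ = 0 := by
    rcases le_total (f v) 0 with h | h
    · have hmem : (0 : ℝ) ∈ Set.Icc (f v) (f (-v)) :=
        ⟨h, by rw [hodd]; linarith⟩
      obtain ⟨v₀, hv₀, hv₀'⟩ := hconn.isPreconnected.intermediate_value hv hnegv hfc hmem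
      exact ⟨v₀, hv₀, hv₀'⟩
    · have hmem : (0 : ℝ) ∈ Set.Icc (f (-v)) (f v) :=
        ⟨by rw [hodd]; linarith, h⟩
      obtain ⟨v₀, hv₀, hv₀'⟩ := hconn.isPreconnected.intermediate_value hnegv hv hfc hmem
      exact ⟨v₀, hv₀, hv₀'⟩
  obtain ⟨v₀, hv₀, hfv₀⟩ := hzero
  have hfv₀' : ⟪O', (v₀ : EuclideanSpace ℝ (Fin (n + 1)))⟫
      - δ (v₀ : EuclideanSpace ℝ (Fin (n + 1))) = 0 := hfv₀
  have hperp : ∀ w ∈ ℓ.direction, ⟪w, (v₀ : EuclideanSpace ℝ (Fin (n + 1)))⟫ = 0 := by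
    intro w hw
    have hmem : (v₀ : EuclideanSpace ℝ (Fin (n + 1))) ∈ ℓ.directionᗮ := v₀.2
    rw [Submodule.mem_orthogonal] at hmem
    exact hmem w hw
  refine ⟨(v₀ : EuclideanSpace ℝ (Fin (n + 1))), hmap hv₀, ?_, hfv₀', ?_⟩
  · intro w hw
    rw [real_inner_comm]
    exact hperp w hw
  · intro z hz
    have hzw : z - O' ∈ ℓ.direction := AffineSubspace.vsub_mem_direction hz hO'
    have h0 : ⟪z - O', (v₀ : EuclideanSpace ℝ (Fin (n + 1)))⟫ = 0 := hperp _ hzw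
    have hsub := inner_sub_left (𝕜 := ℝ) z O' (v₀ : EuclideanSpace ℝ (Fin (n + 1)))
    rw [h0] at hsub
    simp only [Set.mem_setOf_eq]
    linarith [hsub, hfv₀']
end

section
/- Let K be a convex body contained in the interior of the closed unit ball of ℝ^n (n ≥ 2). If for every unit vector x ∈ S^(n−1) the intersection of the support cone boundaries S(K,x) ∩ S(K,−x) is contained in the hyperplane x^⊥ = {z : ⟨z,x⟩ = 0}, then the origin lies in the interior of K. -/
open scoped RealInnerProductSpace

/-- The cone generated by `K` with apex `x`: `C(K,x) = {x + λ(y - x) : y ∈ K, λ ≥ 0}`. -/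
def coneGen {n : ℕ} (K : Set (EuclideanSpace ℝ (Fin n))) (x : EuclideanSpace ℝ (Fin n)) :
    Set (EuclideanSpace ℝ (Fin n)) :=
  {z | ∃ y ∈ K, ∃ l : ℝ, 0 ≤ l ∧ z = x + l • (y - x)}

/-- The support cone `S(K,x)` is the boundary of `C(K,x)`. -/
def supportCone {n : ℕ} (K : Set (EuclideanSpace ℝ (Fin n))) (x : EuclideanSpace ℝ (Fin n)) :
    Set (EuclideanSpace ℝ (Fin n)) :=
  frontier (coneGen K x)

/-- If the apex lies in the hyperplane `u^⊥` and `K` lies in the halfspace `{⟪·,u⟫ ≥ 0}`, then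
the whole cone lies in that halfspace. -/
lemma coneGen_subset_halfspace {n : ℕ} {K : Set (EuclideanSpace ℝ (Fin n))}
    {a u : EuclideanSpace ℝ (Fin n)} (ha : ⟪a, u⟫ = 0)
    (hK : ∀ y ∈ K, 0 ≤ ⟪y, u⟫) :
    ∀ w ∈ coneGen K a, 0 ≤ ⟪w, u⟫ := by
  rintro w ⟨y, hy, l, hl, rfl⟩
  have h : ⟪a + l • (y - a), u⟫ = l * ⟪y, u⟫ := by
    rw [inner_add_left, real_inner_smul_left, inner_sub_left, ha]
    ring
  rw [h]
  exact mul_nonneg hl (hK y hy)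

/-- A point of a set contained in a halfspace, lying on the boundary hyperplane,
is in the frontier of the set. -/
lemma mem_frontier_of_halfspace {n : ℕ} {C : Set (EuclideanSpace ℝ (Fin n))}
    {v z : EuclideanSpace ℝ (Fin n)} (hv : v ≠ 0)
    (hC : ∀ w ∈ C, 0 ≤ ⟪w, v⟫) (hz : z ∈ C) (h0 : ⟪z, v⟫ = 0) :
    z ∈ frontier C := by
  refine ⟨subset_closure hz, ?_⟩
  intro hint
  rw [mem_interior_iff_mem_nhds, Metric.mem_nhds_iff] at hint
  obtain ⟨ε, hε, hball⟩ := hint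
  have hvn : (0:ℝ) < ‖v‖ := norm_pos_iff.mpr hv
  set t : ℝ := ε / (2 * ‖v‖) with ht
  have htpos : 0 < t := by positivity
  have hw : z - t • v ∈ C := by
    apply hball
    rw [Metric.mem_ball, dist_eq_norm]
    have h1 : z - t • v - z = -(t • v) := by abel
    rw [h1, norm_neg, norm_smul, Real.norm_eq_abs, abs_of_pos htpos, ht]
    rw [div_mul_eq_mul_div, mul_comm]
    have : ‖v‖ * ε / (2 * ‖v‖) = ε / 2 := by
      field_simp
    rw [this]
    linarith
  have h2 := hC _ hw
  rw [inner_sub_left, h0, real_inner_smul_left, real_inner_self_eq_norm_mul_norm] at h2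
  nlinarith [mul_pos htpos (mul_pos hvn hvn)]

/-- if `K` is a convex body inside the open unit ball of `ℝⁿ` (`n ≥ 2`) and
for every unit vector `x` the set `S(K,x) ∩ S(K,-x)` lies in the hyperplane `x^⊥`,
then the origin belongs to the interior of `K`. -/
theorem stmt_2 {n : ℕ} (hn : 2 ≤ n)
    (K : Set (EuclideanSpace ℝ (Fin n)))
    (hKcomp : IsCompact K) (hKconv : Convex ℝ K) (hKint : (interior K).Nonempty)
    (hKball : K ⊆ Metric.ball (0 : EuclideanSpace ℝ (Fin n)) 1)
    (hyp : ∀ x ∈ Metric.sphere (0 : EuclideanSpace ℝ (Fin n)) 1,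
      supportCone K x ∩ supportCone K (-x) ⊆ {z | ⟪z, x⟫ = 0}) :
    (0 : EuclideanSpace ℝ (Fin n)) ∈ interior K := by
  by_contra h0int
  obtain ⟨p₀, hp₀⟩ := hKint
  by_cases h0K : (0 : EuclideanSpace ℝ (Fin n)) ∈ K
  · -- Case 1: 0 ∈ K but not in the interior.
    obtain ⟨f, hf⟩ := geometric_hahn_banach_open_point hKconv.interior isOpen_interior h0int
    have hf0 : f (0 : EuclideanSpace ℝ (Fin n)) = 0 := map_zero f
    have hfp₀ : f p₀ < 0 := by
      have := hf p₀ hp₀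
      rwa [hf0] at this
    -- f ≤ 0 on K
    have hfK : ∀ y ∈ K, f y ≤ 0 := by
      intro y hy
      by_contra hpos
      push_neg at hpos
      have hd : 0 < f y - f p₀ := by linarith
      set t : ℝ := f y / (2 * (f y - f p₀)) with htdef
      have ht0 : 0 < t := by positivity
      have ht1 : t < 1 := by
        rw [htdef, div_lt_one (by linarith)]
        nlinarith
      have hmem : t • p₀ + (1 - t) • y ∈ interior K :=
        hKconv.combo_interior_self_mem_interior hp₀ hy ht0 (by linarith) (by ring)
      have hval := hf _ hmem
      rw [hf0, map_add, map_smul, map_smul] at hval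
      simp only [smul_eq_mul] at hval
      have hteq : t * (f y - f p₀) = f y / 2 := by
        have hne : f y - f p₀ ≠ 0 := hd.ne'
        rw [htdef]
        field_simp
      nlinarith
    -- the inner-product vector representing -f
    set u := -((InnerProductSpace.toDual ℝ (EuclideanSpace ℝ (Fin n))).symm f) with hu
    have hinner : ∀ w, ⟪u, w⟫ = -f w := by
      intro w
      rw [hu, inner_neg_left, InnerProductSpace.toDual_symm_apply]
    have hune : u ≠ 0 := by
      intro h
      have : f p₀ = 0 := by
        have := hinner p₀
        rw [h, inner_zero_left] at this
        linarith
      linarith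
    -- pick a unit vector orthogonal to u
    have hfin : Module.finrank ℝ ((ℝ ∙ u)ᗮ) = n - 1 := by
      have h1 : Module.finrank ℝ (ℝ ∙ u) = 1 := finrank_span_singleton hune
      have h2 := Submodule.finrank_add_finrank_orthogonal (K := (ℝ ∙ u))
      rw [h1, finrank_euclideanSpace_fin] at h2
      omega
    have hnebot : ((ℝ ∙ u)ᗮ) ≠ ⊥ := by
      intro h
      rw [h, finrank_bot] at hfin
      omega
    obtain ⟨x', hx'mem, hx'ne⟩ := Submodule.exists_mem_ne_zero_of_ne_bot hnebot
    have hx'orth : ⟪x', u⟫ = 0 := by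
      have h := (Submodule.mem_orthogonal _ _).mp hx'mem u (Submodule.mem_span_singleton_self u)
      rw [real_inner_comm]
      exact h
    set x := ‖x'‖⁻¹ • x' with hx
    have hxnorm : ‖x‖ = 1 := norm_smul_inv_norm hx'ne
    have hxu : ⟪x, u⟫ = 0 := by
      rw [hx, real_inner_smul_left, hx'orth, mul_zero]
    have hxsphere : x ∈ Metric.sphere (0 : EuclideanSpace ℝ (Fin n)) 1 := by
      simpa [mem_sphere_zero_iff_norm] using hxnorm
    have hKpos : ∀ y ∈ K, 0 ≤ ⟪y, u⟫ := by
      intro y hy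
      rw [real_inner_comm, hinner]
      linarith [hfK y hy]
    set z := (2:ℝ)⁻¹ • x with hz
    have hz1 : z ∈ coneGen K x := by
      refine ⟨0, h0K, (2:ℝ)⁻¹, by norm_num, ?_⟩
      rw [hz]; module
    have hz2 : z ∈ coneGen K (-x) := by
      refine ⟨0, h0K, (3/2 : ℝ), by norm_num, ?_⟩
      rw [hz]; module
    have hzu : ⟪z, u⟫ = 0 := by
      rw [hz, real_inner_smul_left, hxu, mul_zero]
    have hmemS1 : z ∈ supportCone K x :=
      mem_frontier_of_halfspace hune (coneGen_subset_halfspace hxu hKpos) hz1 hzu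
    have hmemS2 : z ∈ supportCone K (-x) := by
      have hxu' : ⟪-x, u⟫ = 0 := by rw [inner_neg_left, hxu, neg_zero]
      exact mem_frontier_of_halfspace hune (coneGen_subset_halfspace hxu' hKpos) hz2 hzu
    have hcontra := hyp x hxsphere ⟨hmemS1, hmemS2⟩
    have hzx : ⟪z, x⟫ = (2:ℝ)⁻¹ := by
      rw [hz, real_inner_smul_left, real_inner_self_eq_norm_mul_norm, hxnorm]
      norm_num
    rw [Set.mem_setOf_eq, hzx] at hcontra
    norm_num at hcontra
  · -- Case 2: 0 ∉ K.
    have hKne : K.Nonempty := ⟨p₀, interior_subset hp₀⟩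
    -- support function
    set φ := fun v : EuclideanSpace ℝ (Fin n) => sSup ((fun y => ⟪y, v⟫) '' K) with hφ
    have himgne : ∀ v, ((fun y => ⟪y, v⟫) '' K).Nonempty := fun v => hKne.image _
    have hbdd : ∀ v, BddAbove ((fun y => ⟪y, v⟫) '' K) := by
      intro v
      refine ⟨‖v‖, ?_⟩
      rintro r ⟨y, hy, rfl⟩
      calc ⟪y, v⟫ ≤ ‖y‖ * ‖v‖ := real_inner_le_norm y v
        _ ≤ 1 * ‖v‖ := by
            have : ‖y‖ < 1 := by
              have := hKball hy
              rwa [mem_ball_zero_iff] at this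
            nlinarith [norm_nonneg v]
        _ = ‖v‖ := one_mul _
    have hle : ∀ v, ∀ y ∈ K, ⟪y, v⟫ ≤ φ v := fun v y hy => le_csSup (hbdd v) ⟨y, hy, rfl⟩
    have hLip : ∀ v w, φ v ≤ φ w + ‖v - w‖ := by
      intro v w
      apply csSup_le (himgne v)
      rintro r ⟨y, hy, rfl⟩
      have h1 : ⟪y, w⟫ ≤ φ w := hle w y hy
      have h2 : ⟪y, v - w⟫ ≤ ‖v - w‖ := by
        calc ⟪y, v - w⟫ ≤ ‖y‖ * ‖v - w‖ := real_inner_le_norm _ _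
          _ ≤ 1 * ‖v - w‖ := by
              have : ‖y‖ < 1 := by
                have := hKball hy
                rwa [mem_ball_zero_iff] at this
              nlinarith [norm_nonneg (v - w)]
          _ = ‖v - w‖ := one_mul _
      have h3 : ⟪y, v⟫ = ⟪y, w⟫ + ⟪y, v - w⟫ := by rw [inner_sub_right]; ring
      linarith
    have hcont : Continuous φ := by
      have hl : LipschitzWith 1 φ := by
        apply LipschitzWith.of_dist_le_mul
        intro v w
        rw [Real.dist_eq, dist_eq_norm, NNReal.coe_one, one_mul, abs_sub_le_iff]
        constructor
        · have := hLip v w; linarith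
        · have := hLip w v
          rw [show ‖w - v‖ = ‖v - w‖ from norm_sub_rev w v] at this
          linarith
      exact hl.continuous
    -- a direction with negative support value (strict separation of 0 from K)
    obtain ⟨f, c, hfK, hc0⟩ :=
      geometric_hahn_banach_closed_point hKconv hKcomp.isClosed h0K
    rw [map_zero] at hc0
    set v₁' := (InnerProductSpace.toDual ℝ (EuclideanSpace ℝ (Fin n))).symm f with hv₁'
    have hinner : ∀ w, ⟪v₁', w⟫ = f w := fun w => InnerProductSpace.toDual_symm_apply
    have hv₁'ne : v₁' ≠ 0 := by
      intro h
      obtain ⟨y, hy⟩ := hKne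
      have h1 : f y = 0 := by rw [← hinner, h, inner_zero_left]
      have := hfK y hy
      linarith
    set v₁ := ‖v₁'‖⁻¹ • v₁' with hv₁
    have hv₁sphere : v₁ ∈ Metric.sphere (0 : EuclideanSpace ℝ (Fin n)) 1 := by
      simpa [mem_sphere_zero_iff_norm] using norm_smul_inv_norm (𝕜 := ℝ) hv₁'ne
    have hφv₁ : φ v₁ < 0 := by
      have hpos : (0:ℝ) < ‖v₁'‖⁻¹ := by
        rw [inv_pos]; exact norm_pos_iff.mpr hv₁'ne
      have hsup : φ v₁ ≤ ‖v₁'‖⁻¹ * c := by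
        apply csSup_le (himgne v₁)
        rintro r ⟨y, hy, rfl⟩
        show ⟪y, v₁⟫ ≤ ‖v₁'‖⁻¹ * c
        have heq : ⟪y, v₁⟫ = ‖v₁'‖⁻¹ * f y := by
          rw [hv₁, real_inner_smul_right, real_inner_comm, hinner]
        rw [heq]
        nlinarith [hfK y hy]
      nlinarith
    -- a direction with positive support value
    obtain ⟨y₁, hy₁⟩ := id hKne
    have hy₁ne : y₁ ≠ 0 := fun h => h0K (h ▸ hy₁)
    have hy₁pos : (0:ℝ) < ‖y₁‖ := norm_pos_iff.mpr hy₁ne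
    set v₂ := ‖y₁‖⁻¹ • y₁ with hv₂
    have hv₂sphere : v₂ ∈ Metric.sphere (0 : EuclideanSpace ℝ (Fin n)) 1 := by
      simpa [mem_sphere_zero_iff_norm] using norm_smul_inv_norm (𝕜 := ℝ) hy₁ne
    have hφv₂ : 0 < φ v₂ := by
      have h1 : ⟪y₁, v₂⟫ ≤ φ v₂ := hle v₂ y₁ hy₁
      have h2 : ⟪y₁, v₂⟫ = ‖y₁‖ := by
        rw [hv₂, real_inner_smul_right, real_inner_self_eq_norm_mul_norm]
        field_simp
      linarith
    -- intermediate value on the sphere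
    have hrank : 1 < Module.rank ℝ (EuclideanSpace ℝ (Fin n)) := by
      rw [← Module.finrank_eq_rank, finrank_euclideanSpace_fin]
      exact_mod_cast hn.trans_lt' one_lt_two
    have hconn : IsPreconnected (Metric.sphere (0 : EuclideanSpace ℝ (Fin n)) 1) :=
      (isConnected_sphere hrank 0 zero_le_one).isPreconnected
    have hIVT := hconn.intermediate_value hv₁sphere hv₂sphere hcont.continuousOn
    have h0mem : (0:ℝ) ∈ Set.Icc (φ v₁) (φ v₂) := ⟨hφv₁.le, hφv₂.le⟩
    obtain ⟨v, hvsphere, hφv⟩ := hIVT h0mem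
    have hvne : v ≠ 0 := by
      intro h
      rw [h] at hvsphere
      simp [mem_sphere_zero_iff_norm] at hvsphere
    -- the maximum over K in direction v is attained
    have hcontv : ContinuousOn (fun y : EuclideanSpace ℝ (Fin n) => ⟪y, v⟫) K :=
      (continuous_id.inner continuous_const).continuousOn
    obtain ⟨y₀, hy₀K, hy₀max⟩ := hKcomp.exists_isMaxOn hKne hcontv
    have hy₀le : ∀ y ∈ K, ⟪y, v⟫ ≤ ⟪y₀, v⟫ := fun y hy => hy₀max hy
    have hy₀v : ⟪y₀, v⟫ = 0 := by
      have h1 : ⟪y₀, v⟫ ≤ φ v := hle v y₀ hy₀K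
      have h2 : φ v ≤ ⟪y₀, v⟫ := by
        apply csSup_le (himgne v)
        rintro r ⟨y, hy, rfl⟩
        exact hy₀le y hy
      rw [hφv] at h1 h2
      linarith
    have hKneg : ∀ y ∈ K, 0 ≤ ⟪y, -v⟫ := by
      intro y hy
      rw [inner_neg_right]
      have := hy₀le y hy
      rw [hy₀v] at this
      linarith
    have hy₀ne : y₀ ≠ 0 := fun h => h0K (h ▸ hy₀K)
    have hy₀pos : (0:ℝ) < ‖y₀‖ := norm_pos_iff.mpr hy₀ne
    set x := ‖y₀‖⁻¹ • y₀ with hx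
    have hxsphere : x ∈ Metric.sphere (0 : EuclideanSpace ℝ (Fin n)) 1 := by
      simpa [mem_sphere_zero_iff_norm] using norm_smul_inv_norm (𝕜 := ℝ) hy₀ne
    have hvne' : -v ≠ 0 := neg_ne_zero.mpr hvne
    have hxv : ⟪x, -v⟫ = 0 := by
      rw [inner_neg_right, hx, real_inner_smul_left, hy₀v, mul_zero, neg_zero]
    have hxv' : ⟪-x, -v⟫ = 0 := by
      rw [inner_neg_left, hxv, neg_zero]
    have hz1 : y₀ ∈ coneGen K x := ⟨y₀, hy₀K, 1, zero_le_one, by module⟩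
    have hz2 : y₀ ∈ coneGen K (-x) := ⟨y₀, hy₀K, 1, zero_le_one, by module⟩
    have hy₀v' : ⟪y₀, -v⟫ = 0 := by rw [inner_neg_right, hy₀v, neg_zero]
    have hmemS1 : y₀ ∈ supportCone K x :=
      mem_frontier_of_halfspace hvne' (coneGen_subset_halfspace hxv hKneg) hz1 hy₀v'
    have hmemS2 : y₀ ∈ supportCone K (-x) :=
      mem_frontier_of_halfspace hvne' (coneGen_subset_halfspace hxv' hKneg) hz2 hy₀v'
    have hcontra := hyp x hxsphere ⟨hmemS1, hmemS2⟩
    rw [Set.mem_setOf_eq] at hcontra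
    have hyx : ⟪y₀, x⟫ = ‖y₀‖ := by
      rw [hx, real_inner_smul_right, real_inner_self_eq_norm_mul_norm]
      field_simp
    rw [hyx] at hcontra
    linarith
end

section
/- Let K be a convex body contained in the interior of the unit ball of ℝ^n (n ≥ 2) with 0 ∈ int K. If for every unit vector x ∈ S^(n−1) the set S(K,x) ∩ S(K,−x) is contained in x^⊥, then for every x ∈ S^(n−1) the central projection of K onto x^⊥ from the point x equals the central projection of K onto x^⊥ from the point −x. -/
open scoped RealInnerProductSpace

variable {n : ℕ}

lemma mem_coneGen_of_mem {K : Set (EuclideanSpace ℝ (Fin n))} {a y : EuclideanSpace ℝ (Fin n)}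
    (hy : y ∈ K) : y ∈ coneGen K a :=
  ⟨y, hy, 1, zero_le_one, by module⟩

lemma coneGen_slice {K : Set (EuclideanSpace ℝ (Fin n))}
    (hKball : K ⊆ Metric.ball (0 : EuclideanSpace ℝ (Fin n)) 1)
    {a : EuclideanSpace ℝ (Fin n)} (ha : ‖a‖ = 1) :
    coneGen K a ∩ {z | ⟪z, a⟫ = 0} =
      (fun y => a + (1 - ⟪y, a⟫)⁻¹ • (y - a)) '' K := by
  have haa : ⟪a, a⟫ = 1 := by
    rw [real_inner_self_eq_norm_mul_norm, ha]; ring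
  have hlt : ∀ y ∈ K, ⟪y, a⟫ < 1 := by
    intro y hy
    have h1 : ‖y‖ < 1 := by simpa using hKball hy
    calc ⟪y, a⟫ ≤ ‖y‖ * ‖a‖ := real_inner_le_norm y a
    _ = ‖y‖ := by rw [ha, mul_one]
    _ < 1 := h1
  ext w
  constructor
  · rintro ⟨⟨y, hy, l, hl, rfl⟩, hw⟩
    have hek : ⟪a + l • (y - a), a⟫ = 1 + l * (⟪y, a⟫ - 1) := by
      rw [inner_add_left, real_inner_smul_left, inner_sub_left, haa]
    have hw' : 1 + l * (⟪y, a⟫ - 1) = 0 := by rw [← hek]; exact hw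
    have hleq : l = (1 - ⟪y, a⟫)⁻¹ := by
      refine eq_inv_of_mul_eq_one_left ?_
      linear_combination -hw'
    exact ⟨y, hy, by rw [hleq]⟩
  · rintro ⟨y, hy, rfl⟩
    have h1 : (0:ℝ) < 1 - ⟪y, a⟫ := by have := hlt y hy; linarith
    refine ⟨⟨y, hy, (1 - ⟪y, a⟫)⁻¹, by positivity, rfl⟩, ?_⟩
    show ⟪a + (1 - ⟪y, a⟫)⁻¹ • (y - a), a⟫ = 0
    have h2 : (1 - ⟪y,a⟫)⁻¹ * (1 - ⟪y,a⟫) = 1 := inv_mul_cancel₀ (ne_of_gt h1)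
    rw [inner_add_left, real_inner_smul_left, inner_sub_left, haa]
    linear_combination -h2

lemma coneGen_slice_compact {K : Set (EuclideanSpace ℝ (Fin n))}
    (hKcomp : IsCompact K)
    (hKball : K ⊆ Metric.ball (0 : EuclideanSpace ℝ (Fin n)) 1)
    {a : EuclideanSpace ℝ (Fin n)} (ha : ‖a‖ = 1) :
    IsCompact (coneGen K a ∩ {z | ⟪z, a⟫ = 0}) := by
  rw [coneGen_slice hKball ha]
  apply hKcomp.image_of_continuousOn
  have hlt : ∀ y ∈ K, ⟪y, a⟫ < 1 := by
    intro y hy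
    have h1 : ‖y‖ < 1 := by simpa using hKball hy
    calc ⟪y, a⟫ ≤ ‖y‖ * ‖a‖ := real_inner_le_norm y a
    _ = ‖y‖ := by rw [ha, mul_one]
    _ < 1 := h1
  apply ContinuousOn.add continuousOn_const
  apply ContinuousOn.smul (f := fun y => (1 - ⟪y, a⟫)⁻¹) (g := fun y => y - a)
  · apply ContinuousOn.inv₀
    · exact (continuous_const.sub (continuous_id.inner continuous_const)).continuousOn
    · intro y hy
      have := hlt y hy
      intro h; rw [sub_eq_zero] at h; exact absurd h.symm (ne_of_lt this)
  · exact (continuous_id.sub continuous_const).continuousOn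

lemma coneGen_ray {K : Set (EuclideanSpace ℝ (Fin n))} {a q : EuclideanSpace ℝ (Fin n)}
    {t : ℝ} (ht : 0 < t) (hq : q ∈ coneGen K a) (hq' : q ∉ interior (coneGen K a)) :
    a + t • (q - a) ∈ coneGen K a ∧ a + t • (q - a) ∉ interior (coneGen K a) := by
  constructor
  · obtain ⟨y, hy, l, hl, rfl⟩ := hq
    exact ⟨y, hy, t * l, mul_nonneg ht.le hl, by module⟩
  · intro hin
    apply hq'
    have hcont : Continuous fun v : EuclideanSpace ℝ (Fin n) => a + t • (v - a) :=
      continuous_const.add ((continuous_id.sub continuous_const).const_smul t)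
    have hUopen : IsOpen ((fun v : EuclideanSpace ℝ (Fin n) => a + t • (v - a)) ⁻¹'
        (interior (coneGen K a))) := isOpen_interior.preimage hcont
    have hqU : q ∈ (fun v : EuclideanSpace ℝ (Fin n) => a + t • (v - a)) ⁻¹'
        (interior (coneGen K a)) := hin
    have hUsub : (fun v : EuclideanSpace ℝ (Fin n) => a + t • (v - a)) ⁻¹'
        (interior (coneGen K a)) ⊆ coneGen K a := by
      intro v hv
      obtain ⟨y, hy, l, hl, heq⟩ := interior_subset hv
      refine ⟨y, hy, t⁻¹ * l, mul_nonneg (inv_nonneg.mpr ht.le) hl, ?_⟩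
      have h2 : t • (v - a) = l • (y - a) := add_left_cancel heq
      have h3 : v - a = (t⁻¹ * l) • (y - a) := by
        calc v - a = t⁻¹ • (t • (v - a)) := (inv_smul_smul₀ (ne_of_gt ht) _).symm
        _ = t⁻¹ • (l • (y - a)) := by rw [h2]
        _ = (t⁻¹ * l) • (y - a) := (mul_smul _ _ _).symm
      rw [← h3]; module
    exact (hUopen.subset_interior_iff.mpr hUsub) hqU

lemma coneGen_step {K : Set (EuclideanSpace ℝ (Fin n))}
    (hKcomp : IsCompact K)
    (hKball : K ⊆ Metric.ball (0 : EuclideanSpace ℝ (Fin n)) 1)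
    (h0 : (0 : EuclideanSpace ℝ (Fin n)) ∈ interior K)
    {x : EuclideanSpace ℝ (Fin n)} (hx : ‖x‖ = 1)
    (hypx : supportCone K x ∩ supportCone K (-x) ⊆ {z | ⟪z, x⟫ = 0})
    {z : EuclideanSpace ℝ (Fin n)} (hperp : ⟪z, x⟫ = 0) (hz : z ∈ coneGen K x) :
    z ∈ coneGen K (-x) := by
  by_cases hz0 : z = 0
  · exact hz0 ▸ mem_coneGen_of_mem (interior_subset h0)
  by_contra hznot
  have hxx : ⟪x, x⟫ = 1 := by rw [real_inner_self_eq_norm_mul_norm, hx]; ring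
  have hznorm : (0:ℝ) < ‖z‖ := norm_pos_iff.mpr hz0
  -- the two slices
  set P : Set (EuclideanSpace ℝ (Fin n)) := coneGen K x ∩ {w | ⟪w, x⟫ = 0} with hP
  set Q : Set (EuclideanSpace ℝ (Fin n)) := coneGen K (-x) ∩ {w | ⟪w, x⟫ = 0} with hQ
  have hPcomp : IsCompact P := coneGen_slice_compact hKcomp hKball hx
  have hQcomp : IsCompact Q := by
    have : Q = coneGen K (-x) ∩ {w | ⟪w, -x⟫ = 0} := by
      ext w; simp [hQ, inner_neg_right, neg_eq_zero]
    rw [this]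
    exact coneGen_slice_compact hKcomp hKball (by rwa [norm_neg])
  have hsmulcont : Continuous fun t : ℝ => t • z := continuous_id.smul continuous_const
  have hperp_smul : ∀ t : ℝ, ⟪t • z, x⟫ = 0 := by
    intro t; rw [real_inner_smul_left, hperp, mul_zero]
  -- T₂ and s₂
  set T₂ : Set ℝ := {t : ℝ | t • z ∈ P} with hT₂
  have hT₂closed : IsClosed T₂ := hPcomp.isClosed.preimage hsmulcont
  have hT₂ne : (1:ℝ) ∈ T₂ := by
    show (1:ℝ) • z ∈ P
    rw [one_smul]; exact ⟨hz, hperp⟩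
  have hT₂bdd : BddAbove T₂ := by
    obtain ⟨R, hR⟩ := hPcomp.isBounded.exists_norm_le
    refine ⟨R / ‖z‖, fun t ht => ?_⟩
    have h1 : ‖t • z‖ ≤ R := hR _ ht
    rw [norm_smul, Real.norm_eq_abs] at h1
    rw [le_div_iff₀ hznorm]
    calc t * ‖z‖ ≤ |t| * ‖z‖ := by
          have := le_abs_self t; nlinarith
    _ ≤ R := h1
  set s₂ : ℝ := sSup T₂ with hs₂def
  have hs₂mem : s₂ ∈ T₂ := hT₂closed.csSup_mem ⟨1, hT₂ne⟩ hT₂bdd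
  have hs₂ge : (1:ℝ) ≤ s₂ := le_csSup hT₂bdd hT₂ne
  -- T₄ and s₄
  set T₄ : Set ℝ := {t : ℝ | t • z ∈ Q ∧ t ≤ 1} with hT₄
  have hT₄closed : IsClosed T₄ := by
    apply IsClosed.inter (hQcomp.isClosed.preimage hsmulcont)
    exact isClosed_Iic
  have hT₄ne : (0:ℝ) ∈ T₄ := by
    constructor
    · show (0:ℝ) • z ∈ Q
      rw [zero_smul]
      exact ⟨mem_coneGen_of_mem (interior_subset h0), by simp [inner_zero_left]⟩
    · exact zero_le_one
  have hT₄bdd : BddAbove T₄ := ⟨1, fun t ht => ht.2⟩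
  set s₄ : ℝ := sSup T₄ with hs₄def
  have hs₄mem : s₄ ∈ T₄ := hT₄closed.csSup_mem ⟨0, hT₄ne⟩ hT₄bdd
  have hs₄lt : s₄ < 1 := by
    rcases lt_or_eq_of_le hs₄mem.2 with h | h
    · exact h
    · exfalso; apply hznot
      have := hs₄mem.1
      rw [h, one_smul] at this
      exact this.1
  -- 0 ∈ interior of coneGen K (-x), so s₄ > 0
  have h0int : (0 : EuclideanSpace ℝ (Fin n)) ∈ interior (coneGen K (-x)) :=
    interior_mono (fun y hy => mem_coneGen_of_mem hy) h0
  have hs₄pos : (0:ℝ) < s₄ := by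
    obtain ⟨δ, hδpos, hδ⟩ := Metric.mem_nhds_iff.mp (mem_interior_iff_mem_nhds.mp h0int)
    set ε : ℝ := min (δ / (2 * ‖z‖)) 1 with hε
    have hεpos : 0 < ε := lt_min (by positivity) one_pos
    have hεT : ε ∈ T₄ := by
      constructor
      · refine ⟨hδ ?_, hperp_smul ε⟩
        rw [Metric.mem_ball, dist_zero_right, norm_smul, Real.norm_eq_abs,
          abs_of_pos hεpos]
        calc ε * ‖z‖ ≤ δ / (2 * ‖z‖) * ‖z‖ := by
              have := min_le_left (δ / (2 * ‖z‖)) 1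
              nlinarith
        _ < δ := by rw [div_mul_eq_mul_div]; rw [div_lt_iff₀ (by positivity)]; nlinarith
      · exact min_le_right _ _
    exact lt_of_lt_of_le hεpos (le_csSup hT₄bdd hεT)
  -- boundary points
  have hq₂bd : s₂ • z ∈ coneGen K x ∧ s₂ • z ∉ interior (coneGen K x) := by
    refine ⟨hs₂mem.1, fun hin => ?_⟩
    obtain ⟨δ, hδpos, hδ⟩ := Metric.mem_nhds_iff.mp (mem_interior_iff_mem_nhds.mp hin)
    set ε : ℝ := δ / (2 * ‖z‖) with hε
    have hεpos : 0 < ε := by positivity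
    have : s₂ + ε ∈ T₂ := by
      refine ⟨hδ ?_, hperp_smul _⟩
      rw [Metric.mem_ball]
      have : (s₂ + ε) • z - s₂ • z = ε • z := by module
      rw [dist_eq_norm, this, norm_smul, Real.norm_eq_abs, abs_of_pos hεpos]
      rw [hε, div_mul_eq_mul_div, div_lt_iff₀ (by positivity)]; nlinarith
    have := le_csSup hT₂bdd this
    linarith
  have hq₄bd : s₄ • z ∈ coneGen K (-x) ∧ s₄ • z ∉ interior (coneGen K (-x)) := by
    refine ⟨hs₄mem.1.1, fun hin => ?_⟩
    obtain ⟨δ, hδpos, hδ⟩ := Metric.mem_nhds_iff.mp (mem_interior_iff_mem_nhds.mp hin)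
    set ε : ℝ := min (δ / (2 * ‖z‖)) (1 - s₄) with hε
    have hεpos : 0 < ε := lt_min (by positivity) (by linarith)
    have : s₄ + ε ∈ T₄ := by
      refine ⟨⟨hδ ?_, hperp_smul _⟩, ?_⟩
      · rw [Metric.mem_ball]
        have heq : (s₄ + ε) • z - s₄ • z = ε • z := by module
        rw [dist_eq_norm, heq, norm_smul, Real.norm_eq_abs, abs_of_pos hεpos]
        calc ε * ‖z‖ ≤ δ / (2 * ‖z‖) * ‖z‖ := by
              have := min_le_left (δ / (2 * ‖z‖)) (1 - s₄)
              nlinarith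
        _ < δ := by rw [div_mul_eq_mul_div, div_lt_iff₀ (by positivity)]; nlinarith
      · have := min_le_right (δ / (2 * ‖z‖)) (1 - s₄)
        linarith
    have := le_csSup hT₄bdd this
    linarith
  -- the intersection point of the two boundary rays
  have hcpos : (0:ℝ) < s₂ + s₄ := by linarith
  set t₂ : ℝ := 2 * s₄ / (s₂ + s₄) with ht₂
  set t₄ : ℝ := 2 * s₂ / (s₂ + s₄) with ht₄
  have ht₂pos : 0 < t₂ := by positivity
  have ht₄pos : 0 < t₄ := by positivity
  set p : EuclideanSpace ℝ (Fin n) := x + t₂ • (s₂ • z - x) with hp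
  have hray₂ := coneGen_ray ht₂pos hq₂bd.1 hq₂bd.2
  have hray₄ := coneGen_ray ht₄pos hq₄bd.1 hq₄bd.2
  have hpeq : p = -x + t₄ • (s₄ • z - -x) := by
    rw [hp]
    have h1 : 1 - t₂ = -1 + t₄ := by
      rw [ht₂, ht₄]; field_simp; ring
    have h2 : t₂ * s₂ = t₄ * s₄ := by
      rw [ht₂, ht₄]; field_simp
    match_scalars
    · linear_combination h1
    · linear_combination h2
  have hpfront : p ∈ supportCone K x ∩ supportCone K (-x) := by
    constructor
    · exact ⟨subset_closure hray₂.1, hray₂.2⟩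
    · rw [hpeq]
      exact ⟨subset_closure hray₄.1, hray₄.2⟩
  have hpx : ⟪p, x⟫ = 0 := hypx hpfront
  have hpx' : ⟪p, x⟫ = 1 - t₂ := by
    rw [hp, inner_add_left, real_inner_smul_left, inner_sub_left,
      real_inner_smul_left, hperp, hxx]
    ring
  rw [hpx'] at hpx
  have ht₂1 : t₂ = 1 := by linarith
  rw [ht₂] at ht₂1
  rw [div_eq_one_iff_eq (ne_of_gt hcpos)] at ht₂1
  linarith


/-- under the hypothesis that `S(K,x) ∩ S(K,-x) ⊆ x^⊥` for all unit `x`,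
the central projections of `K` onto `x^⊥` from `x` and from `-x` coincide. -/
theorem stmt_3 {n : ℕ} (hn : 2 ≤ n)
    (K : Set (EuclideanSpace ℝ (Fin n)))
    (hKcomp : IsCompact K) (hKconv : Convex ℝ K) (hKint : (interior K).Nonempty)
    (hKball : K ⊆ Metric.ball (0 : EuclideanSpace ℝ (Fin n)) 1)
    (h0 : (0 : EuclideanSpace ℝ (Fin n)) ∈ interior K)
    (hyp : ∀ x ∈ Metric.sphere (0 : EuclideanSpace ℝ (Fin n)) 1,
      supportCone K x ∩ supportCone K (-x) ⊆ {z | ⟪z, x⟫ = 0}) :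
    ∀ x ∈ Metric.sphere (0 : EuclideanSpace ℝ (Fin n)) 1,
      coneGen K x ∩ {z | ⟪z, x⟫ = 0} = coneGen K (-x) ∩ {z | ⟪z, x⟫ = 0} := by
  intro x hx
  have hxn : ‖x‖ = 1 := by rwa [mem_sphere_zero_iff_norm] at hx
  have hxn' : -x ∈ Metric.sphere (0 : EuclideanSpace ℝ (Fin n)) 1 := by
    rw [mem_sphere_zero_iff_norm, norm_neg]; exact hxn
  ext w
  constructor
  · rintro ⟨hw, hperp⟩
    exact ⟨coneGen_step hKcomp hKball h0 hxn (hyp x hx) hperp hw, hperp⟩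
  · rintro ⟨hw, hperp⟩
    have hperp' : ⟪w, -x⟫ = 0 := by rw [inner_neg_right, hperp, neg_zero]
    have := coneGen_step hKcomp hKball h0 (by rwa [norm_neg]) (hyp (-x) hxn') hperp' hw
    rw [neg_neg] at this
    exact ⟨this, hperp⟩
end

section
/- Let K be a convex body contained in the interior of the unit disc of ℝ², such that for every unit vector x ∈ S¹ the set C(K,x) ∩ x^⊥ is a segment of a fixed constant length. Then K is a Euclidean disc centered at the origin. -/
open scoped RealInnerProductSpace

/- ============================ auxiliary development ============================ -/

open Real Set

noncomputable section StmtsAux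

abbrev E2 := EuclideanSpace ℝ (Fin 2)

def Jmap (y : E2) : E2 := WithLp.toLp 2 ![-(y 1), y 0]

@[simp] lemma Jmap_apply0 (y : E2) : Jmap y 0 = -(y 1) := rfl
@[simp] lemma Jmap_apply1 (y : E2) : Jmap y 1 = y 0 := rfl

lemma inner_formula (x y : E2) : ⟪x, y⟫ = x 0 * y 0 + x 1 * y 1 := by
  simp [PiLp.inner_apply, Fin.sum_univ_two, RCLike.inner_apply]; ring

lemma norm_sq_formula (y : E2) : ‖y‖^2 = y 0^2 + y 1^2 := by
  rw [← real_inner_self_eq_norm_sq, inner_formula]; ring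

lemma ext2 {x y : E2} (h0 : x 0 = y 0) (h1 : x 1 = y 1) : x = y := by
  apply WithLp.ofLp_injective 2; funext i; fin_cases i <;> assumption

@[simp] lemma smul_apply2 (a : ℝ) (x : E2) (i : Fin 2) : (a • x) i = a * x i := rfl
@[simp] lemma add_apply2 (x y : E2) (i : Fin 2) : (x + y) i = x i + y i := rfl
@[simp] lemma sub_apply2 (x y : E2) (i : Fin 2) : (x - y) i = x i - y i := rfl
@[simp] lemma neg_apply2 (x : E2) (i : Fin 2) : (-x) i = -(x i) := rfl

lemma inner_J_self (x : E2) : ⟪x, Jmap x⟫ = 0 := by rw [inner_formula]; simp; ring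

lemma inner_J_J (x y : E2) : ⟪Jmap x, Jmap y⟫ = ⟪x, y⟫ := by
  rw [inner_formula, inner_formula]; simp; ring

lemma Jmap_Jmap (x : E2) : Jmap (Jmap x) = -x := by
  apply ext2 <;> simp

lemma Jmap_add (x y : E2) : Jmap (x + y) = Jmap x + Jmap y := by
  apply ext2 <;> simp <;> ring

lemma Jmap_sub (x y : E2) : Jmap (x - y) = Jmap x - Jmap y := by
  apply ext2 <;> simp <;> ring

lemma Jmap_smul (a : ℝ) (x : E2) : Jmap (a • x) = a • Jmap x := by
  apply ext2 <;> simp <;> ring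

lemma norm_Jmap (x : E2) : ‖Jmap x‖ = ‖x‖ := by
  have h := norm_sq_formula (Jmap x)
  have h2 := norm_sq_formula x
  have h3 : ‖Jmap x‖^2 = ‖x‖^2 := by rw [h, h2]; simp; ring
  nlinarith [norm_nonneg x, norm_nonneg (Jmap x), h3]

lemma Jmap_ne_zero {x : E2} (hx : x ≠ 0) : Jmap x ≠ 0 := by
  intro h
  apply hx
  have := norm_Jmap x
  rw [h, norm_zero] at this
  exact norm_eq_zero.mp this.symm

lemma continuous_Jmap : Continuous Jmap := by
  have : Continuous fun y : E2 => (WithLp.toLp 2 (![-(y 1), y 0] : Fin 2 → ℝ) : E2) := by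
    refine (PiLp.continuous_toLp 2 (fun _ : Fin 2 => ℝ)).comp
      (f := fun y : E2 => (![-(y 1), y 0] : Fin 2 → ℝ)) ?_
    apply continuous_pi
    intro i
    fin_cases i
    · exact (PiLp.continuous_apply 2 (fun _ : Fin 2 => ℝ) (1 : Fin 2)).neg
    · exact PiLp.continuous_apply 2 (fun _ : Fin 2 => ℝ) (0 : Fin 2)
  exact this

/-- decomposition in the orthonormal basis (x, Jx) -/
lemma decomp {x : E2} (hx : ‖x‖ = 1) (y : E2) :
    y = ⟪y, x⟫ • x + ⟪y, Jmap x⟫ • Jmap x := by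
  have hx2 : x 0 ^ 2 + x 1 ^ 2 = 1 := by rw [← norm_sq_formula, hx]; norm_num
  apply ext2 <;> rw [inner_formula, inner_formula] <;> simp
  · linear_combination (-(y 0)) * hx2
  · linear_combination (-(y 1)) * hx2

lemma pq_norm {x : E2} (hx : ‖x‖ = 1) (y : E2) :
    ⟪y, x⟫^2 + ⟪y, Jmap x⟫^2 = ‖y‖^2 := by
  have hx2 : x 0 ^ 2 + x 1 ^ 2 = 1 := by rw [← norm_sq_formula, hx]; norm_num
  rw [inner_formula, inner_formula, norm_sq_formula]; simp
  linear_combination (y 0^2 + y 1^2) * hx2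

/-- clamped central projection coordinate -/
def sig (ρ : ℝ) (x y : E2) : ℝ := ⟪y, Jmap x⟫ / max (1 - ⟪y, x⟫) (1 - ρ)

/-- the rotated apex -/
def tau (s : ℝ) (x : E2) : E2 := ((s^2 - 1)/(s^2 + 1)) • x + (2*s/(s^2 + 1)) • Jmap x

variable {ρ : ℝ} {x y : E2}

lemma inner_le_of_norms (hx : ‖x‖ = 1) (hy : ‖y‖ ≤ ρ) : ⟪y, x⟫ ≤ ρ := by
  calc ⟪y, x⟫ ≤ ‖y‖ * ‖x‖ := real_inner_le_norm y x
    _ = ‖y‖ := by rw [hx, mul_one]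
    _ ≤ ρ := hy

lemma sig_eq (hx : ‖x‖ = 1) (hy : ‖y‖ ≤ ρ) :
    sig ρ x y = ⟪y, Jmap x⟫ / (1 - ⟪y, x⟫) := by
  unfold sig
  rw [max_eq_left]
  have := inner_le_of_norms hx hy
  linarith

lemma one_sub_pos (hρ : ρ < 1) (hx : ‖x‖ = 1) (hy : ‖y‖ ≤ ρ) : 0 < 1 - ⟪y, x⟫ := by
  have := inner_le_of_norms hx hy
  linarith

lemma sig_mul_denom (hρ : ρ < 1) (hx : ‖x‖ = 1) (hy : ‖y‖ ≤ ρ) :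
    sig ρ x y * (1 - ⟪y, x⟫) = ⟪y, Jmap x⟫ := by
  rw [sig_eq hx hy, div_mul_cancel₀]
  exact ne_of_gt (one_sub_pos hρ hx hy)

lemma norm_tau (hx : ‖x‖ = 1) (s : ℝ) : ‖tau s x‖ = 1 := by
  have h1 : ⟪x, x⟫ = 1 := by rw [real_inner_self_eq_norm_sq, hx]; norm_num
  have h2 : ⟪Jmap x, Jmap x⟫ = 1 := by rw [inner_J_J]; exact h1
  have h3 : ⟪x, Jmap x⟫ = 0 := inner_J_self x
  have h4 : ⟪Jmap x, x⟫ = 0 := by rw [real_inner_comm]; exact h3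
  have hs : s^2 + 1 ≠ 0 := by positivity
  have : ⟪tau s x, tau s x⟫ = 1 := by
    unfold tau
    rw [inner_add_add_self]
    simp only [real_inner_smul_left, real_inner_smul_right, h1, h2, h3, h4]
    field_simp
    ring
  have h5 : ‖tau s x‖^2 = 1 := by rw [← real_inner_self_eq_norm_sq, this]
  nlinarith [norm_nonneg (tau s x)]

lemma inner_tau (hx : ‖x‖ = 1) (s : ℝ) (y : E2) :
    ⟪y, tau s x⟫ = ((s^2-1) * ⟪y, x⟫ + 2*s * ⟪y, Jmap x⟫) / (s^2+1) := by
  unfold tau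
  rw [inner_add_right, real_inner_smul_right, real_inner_smul_right]
  have hs : s^2 + 1 ≠ 0 := by positivity
  field_simp
  try ring

lemma inner_J_tau (hx : ‖x‖ = 1) (s : ℝ) (y : E2) :
    ⟪y, Jmap (tau s x)⟫ = ((s^2-1) * ⟪y, Jmap x⟫ - 2*s * ⟪y, x⟫) / (s^2+1) := by
  unfold tau
  rw [Jmap_add, Jmap_smul, Jmap_smul, Jmap_Jmap]
  rw [inner_add_right, real_inner_smul_right, real_inner_smul_right, inner_neg_right]
  have hs : s^2 + 1 ≠ 0 := by positivity
  field_simp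
  try ring

/-- the denominator at the rotated apex is positive -/
lemma denom_tau_pos (hρ : ρ < 1) (hx : ‖x‖ = 1) (hy : ‖y‖ ≤ ρ) (hρ0 : 0 ≤ ρ) (s : ℝ) :
    0 < 1 - ⟪y, tau s x⟫ := by
  set p := ⟪y, x⟫
  set q := ⟪y, Jmap x⟫
  have hpq : p^2 + q^2 = ‖y‖^2 := pq_norm hx y
  have hylt : ‖y‖ < 1 := lt_of_le_of_lt hy hρ
  have hpq1 : p^2 + q^2 < 1 := by nlinarith [norm_nonneg y]
  have hp1 : p < 1 := by nlinarith [one_sub_pos hρ hx hy]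
  rw [inner_tau hx]
  rw [sub_pos, div_lt_one (by positivity : (0:ℝ) < s^2+1)]
  nlinarith [sq_nonneg (s*(1-p) - q)]

/-- THE MASTER IDENTITY -/
lemma master (hρ : ρ < 1) (hρ0 : 0 ≤ ρ) (hx : ‖x‖ = 1) (hy : ‖y‖ ≤ ρ) (s : ℝ) :
    (sig ρ (tau s x) y + s) * (1 - ⟪y, tau s x⟫) = (s - sig ρ x y) * (1 - ⟪y, x⟫) := by
  have htau_norm := norm_tau hx s
  have hdt := denom_tau_pos hρ hx hy hρ0 s
  have h1 := sig_mul_denom hρ htau_norm hy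
  have h2 := sig_mul_denom hρ hx hy
  have key : ⟪y, Jmap (tau s x)⟫ + s * (1 - ⟪y, tau s x⟫) = s * (1 - ⟪y, x⟫) - ⟪y, Jmap x⟫ := by
    rw [inner_J_tau hx, inner_tau hx]
    have hs : s^2 + 1 ≠ 0 := by positivity
    field_simp
    ring
  nlinarith [h1, h2, key]

lemma master_le (hρ : ρ < 1) (hρ0 : 0 ≤ ρ) (hx : ‖x‖ = 1) (hy : ‖y‖ ≤ ρ) (s : ℝ) :
    sig ρ x y ≤ s ↔ -s ≤ sig ρ (tau s x) y := by
  have hm := master hρ hρ0 hx hy s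
  have hdt := denom_tau_pos hρ hx hy hρ0 s
  have hd := one_sub_pos hρ hx hy
  constructor
  · intro h
    nlinarith
  · intro h
    nlinarith

lemma master_ge (hρ : ρ < 1) (hρ0 : 0 ≤ ρ) (hx : ‖x‖ = 1) (hy : ‖y‖ ≤ ρ) (s : ℝ) :
    s ≤ sig ρ x y ↔ sig ρ (tau s x) y ≤ -s := by
  have hm := master hρ hρ0 hx hy s
  have hdt := denom_tau_pos hρ hx hy hρ0 s
  have hd := one_sub_pos hρ hx hy
  constructor <;> intro h <;> nlinarith

lemma master_eq (hρ : ρ < 1) (hρ0 : 0 ≤ ρ) (hx : ‖x‖ = 1) (hy : ‖y‖ ≤ ρ) (s : ℝ) :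
    sig ρ x y = s ↔ sig ρ (tau s x) y = -s := by
  constructor <;> intro h
  · exact le_antisymm (by rw [← master_ge hρ hρ0 hx hy]; exact le_of_eq h.symm)
      (by rw [← master_le hρ hρ0 hx hy]; exact le_of_eq h)
  · exact le_antisymm ((master_le hρ hρ0 hx hy s).mpr (le_of_eq h.symm))
      ((master_ge hρ hρ0 hx hy s).mpr (le_of_eq h))

variable {ρ : ℝ} {x : E2} {K : Set E2}

/-- key computation: the point on the ray in the hyperplane -/
lemma ray_point (hρ : ρ < 1) (hx : ‖x‖ = 1) {y : E2} (hy : ‖y‖ ≤ ρ) :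
    x + (1 / (1 - ⟪y, x⟫)) • (y - x) = sig ρ x y • Jmap x ∧
    ⟪x + (1 / (1 - ⟪y, x⟫)) • (y - x), x⟫ = 0 := by
  have hxx : ⟪x, x⟫ = 1 := by rw [real_inner_self_eq_norm_sq, hx]; norm_num
  have hp := one_sub_pos hρ hx hy
  set l := 1 / (1 - ⟪y, x⟫) with hl
  set z := x + l • (y - x) with hzdef
  have harith : ∀ p : ℝ, p < 1 → 1 + 1 / (1 - p) * (p - 1) = 0 := by
    intro p hp'
    have h1p : (1:ℝ) - p ≠ 0 := by linarith
    field_simp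
    ring
  have h1 : ⟪z, x⟫ = 0 := by
    rw [hzdef, inner_add_left, real_inner_smul_left, inner_sub_left, hxx, hl]
    exact harith _ (by linarith)
  have h2 : ⟪z, Jmap x⟫ = l * ⟪y, Jmap x⟫ := by
    rw [hzdef, inner_add_left, real_inner_smul_left, inner_sub_left, inner_J_self]
    ring
  have hdec := decomp hx z
  rw [h1, h2] at hdec
  have h3 : l * ⟪y, Jmap x⟫ = sig ρ x y := by
    rw [sig_eq hx hy, hl, div_mul_eq_mul_div, one_mul]
  refine ⟨?_, h1⟩
  rw [hdec, h3]
  simp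

lemma proj_eq (hρ : ρ < 1) (hx : ‖x‖ = 1) (hK : ∀ y ∈ K, ‖y‖ ≤ ρ) :
    coneGen K x ∩ {z | ⟪z, x⟫ = 0} = (fun s : ℝ => s • Jmap x) '' (sig ρ x '' K) := by
  have hxx : ⟪x, x⟫ = 1 := by rw [real_inner_self_eq_norm_sq, hx]; norm_num
  ext z
  constructor
  · rintro ⟨⟨y, hy, l, hl, rfl⟩, hz⟩
    simp only [Set.mem_setOf_eq] at hz
    have hp := one_sub_pos hρ hx (hK y hy)
    have hzx : ⟪x + l • (y - x), x⟫ = 1 + l * (⟪y, x⟫ - 1) := by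
      rw [inner_add_left, real_inner_smul_left, inner_sub_left, hxx]
    rw [hzx] at hz
    have hl' : l = 1 / (1 - ⟪y, x⟫) := by
      rw [eq_div_iff (ne_of_gt hp)]
      linarith [hz]
    refine ⟨sig ρ x y, ⟨y, hy, rfl⟩, ?_⟩
    rw [hl']
    exact ((ray_point hρ hx (hK y hy)).1).symm
  · rintro ⟨s, ⟨y, hy, rfl⟩, rfl⟩
    have hp := one_sub_pos hρ hx (hK y hy)
    obtain ⟨h1, h2⟩ := ray_point hρ hx (hK y hy)
    refine ⟨⟨y, hy, 1 / (1 - ⟪y, x⟫), by positivity, h1.symm⟩, ?_⟩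
    simp only [Set.mem_setOf_eq]
    rw [h1] at h2
    exact h2

/-- packaging hypothesis: the image of sig has a greatest and a least element differing by c -/
lemma bounds_aux {a b : E2} {c : ℝ}
    (hρ : ρ < 1) (hx : ‖x‖ = 1) (hK : ∀ y ∈ K, ‖y‖ ≤ ρ)
    (hseg : coneGen K x ∩ {z | ⟪z, x⟫ = 0} = segment ℝ a b) (hdist : dist a b = c) :
    ∃ F : ℝ, IsGreatest (sig ρ x '' K) F ∧ IsLeast (sig ρ x '' K) (F - c) := by
  have hJx : Jmap x ≠ 0 := by
    intro h
    have := norm_Jmap x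
    rw [h, norm_zero, hx] at this
    norm_num at this
  have heq : (fun s : ℝ => s • Jmap x) '' (sig ρ x '' K) = segment ℝ a b := by
    rw [← proj_eq hρ hx hK, hseg]
  have hinj : Function.Injective (fun s : ℝ => s • Jmap x) := fun s t hst => by
    simpa using smul_left_injective ℝ hJx hst
  -- a and b are in the image
  obtain ⟨α, hα, ha⟩ : a ∈ (fun s : ℝ => s • Jmap x) '' (sig ρ x '' K) := by
    rw [heq]; exact left_mem_segment ℝ a b
  obtain ⟨β, hβ, hb⟩ : b ∈ (fun s : ℝ => s • Jmap x) '' (sig ρ x '' K) := by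
    rw [heq]; exact right_mem_segment ℝ a b
  -- every element of the image is between α and β
  have hbetween : ∀ s ∈ sig ρ x '' K, min α β ≤ s ∧ s ≤ max α β := by
    intro s hs
    have : (fun s : ℝ => s • Jmap x) s ∈ segment ℝ a b := by
      rw [← heq]; exact Set.mem_image_of_mem _ hs
    rw [← ha, ← hb] at this
    obtain ⟨u, v, hu, hv, huv, hsum⟩ := this
    simp only [smul_smul] at hsum
    have : (u * α + v * β) • Jmap x = s • Jmap x := by
      rw [← hsum, add_smul]
    have hs' : s = u * α + v * β := (hinj this).symm
    constructor
    · rw [hs']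
      have h1 := mul_le_mul_of_nonneg_left (min_le_left α β) hu
      have h2 := mul_le_mul_of_nonneg_left (min_le_right α β) hv
      have h3 : u * (min α β) + v * (min α β) = min α β := by rw [← add_mul, huv, one_mul]
      linarith
    · rw [hs']
      have h1 := mul_le_mul_of_nonneg_left (le_max_left α β) hu
      have h2 := mul_le_mul_of_nonneg_left (le_max_right α β) hv
      have h3 : u * (max α β) + v * (max α β) = max α β := by rw [← add_mul, huv, one_mul]
      linarith
  have hdist' : |α - β| = c := by
    rw [← hdist, ← ha, ← hb, dist_eq_norm, ← sub_smul, norm_smul, norm_Jmap, hx, mul_one,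
      Real.norm_eq_abs]
  have hminmax : min α β = max α β - c := by
    rcases le_total α β with h | h
    · rw [min_eq_left h, max_eq_right h, ← hdist', abs_of_nonpos (by linarith)]; ring
    · rw [min_eq_right h, max_eq_left h, ← hdist', abs_of_nonneg (by linarith)]; ring
  refine ⟨max α β, ⟨?_, fun s hs => (hbetween s hs).2⟩, ?_⟩
  · rcases le_total α β with h | h
    · rw [max_eq_right h]; exact hβ
    · rw [max_eq_left h]; exact hα
  · rw [← hminmax]
    refine ⟨?_, fun s hs => (hbetween s hs).1⟩
    rcases le_total α β with h | h
    · rw [min_eq_left h]; exact hα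
    · rw [min_eq_right h]; exact hβ

def xt (t : ℝ) : E2 := WithLp.toLp 2 ![Real.cos t, Real.sin t]

@[simp] lemma xt_apply0 (t : ℝ) : xt t 0 = Real.cos t := rfl
@[simp] lemma xt_apply1 (t : ℝ) : xt t 1 = Real.sin t := rfl

lemma norm_xt (t : ℝ) : ‖xt t‖ = 1 := by
  have h : ‖xt t‖^2 = 1 := by
    rw [norm_sq_formula]
    simp [sin_sq_add_cos_sq, cos_sq_add_sin_sq]
  nlinarith [norm_nonneg (xt t)]

lemma rot_formula (t θ : ℝ) :
    Real.cos θ • xt t + Real.sin θ • Jmap (xt t) = xt (t + θ) := by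
  apply ext2 <;>
    simp only [add_apply2, smul_apply2, Jmap_apply0, Jmap_apply1, xt_apply0, xt_apply1,
      Real.cos_add, Real.sin_add] <;> ring

/-- the turning angle -/
def wfun (s : ℝ) : ℝ := π - 2 * arctan s

lemma wfun_mem (s : ℝ) : 0 < wfun s ∧ wfun s < 2*π := by
  have h1 := Real.arctan_lt_pi_div_two s
  have h2 := Real.neg_pi_div_two_lt_arctan s
  have hpi := Real.pi_pos
  constructor <;> (unfold wfun; linarith)

lemma cos_wfun (s : ℝ) : Real.cos (wfun s) = (s^2 - 1)/(s^2 + 1) := by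
  unfold wfun
  rw [Real.cos_pi_sub, Real.cos_two_mul, Real.cos_arctan]
  have h : (0:ℝ) < 1 + s^2 := by positivity
  rw [div_pow, one_pow, sq_sqrt (by positivity : (0:ℝ) ≤ 1 + s^2)]
  field_simp
  ring

lemma sin_wfun (s : ℝ) : Real.sin (wfun s) = 2*s/(s^2 + 1) := by
  unfold wfun
  rw [Real.sin_pi_sub, Real.sin_two_mul, Real.sin_arctan, Real.cos_arctan]
  calc 2 * (s / Real.sqrt (1 + s^2)) * (1 / Real.sqrt (1 + s^2))
      = 2*s/(Real.sqrt (1 + s^2) * Real.sqrt (1 + s^2)) := by ring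
    _ = 2*s/(1+s^2) := by rw [Real.mul_self_sqrt (by positivity : (0:ℝ) ≤ 1 + s^2)]
    _ = 2*s/(s^2+1) := by ring_nf

lemma tau_xt (s t : ℝ) : tau s (xt t) = xt (t + wfun s) := by
  rw [← rot_formula, cos_wfun, sin_wfun]
  rfl


lemma continuous_xt : Continuous xt := by
  have : Continuous fun t : ℝ => (WithLp.toLp 2 (![Real.cos t, Real.sin t] : Fin 2 → ℝ) : E2) := by
    refine (PiLp.continuous_toLp 2 (fun _ : Fin 2 => ℝ)).comp
      (f := fun t : ℝ => (![Real.cos t, Real.sin t] : Fin 2 → ℝ)) ?_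
    apply continuous_pi
    intro i
    fin_cases i
    · exact Real.continuous_cos
    · exact Real.continuous_sin
  exact this

lemma xt_per (t : ℝ) : xt (t + 2*π) = xt t := by
  apply ext2 <;> simp [Real.cos_add_two_pi, Real.sin_add_two_pi]

/-- Endgame: the functional equations force `f ≡ c/2`. -/
lemma endgame {c : ℝ} (hc : 0 < c) {f : ℝ → ℝ} (hf : Continuous f)
    (hper : ∀ t, f (t + 2*π) = f t)
    (R1 : ∀ t, f (t + (π - 2*arctan (f t))) = c - f t)
    (R2 : ∀ t, f (t + (π - 2*arctan (f t - c))) = c - f t) :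
    ∀ t, f t = c/2 := by
  set D : ℝ → ℝ := fun s => 2*π - 2*arctan s - 2*arctan (c - s) with hD
  have hperiodic : Function.Periodic f (2*π) := hper
  -- forward invariance
  have step1 : ∀ t, f (t + D (f t)) = f t := by
    intro t
    have h1 := R1 t
    have h2 := R1 (t + (π - 2*arctan (f t)))
    rw [h1] at h2
    have hidx : t + (π - 2*arctan (f t)) + (π - 2*arctan (c - f t)) = t + D (f t) := by
      rw [hD]; ring
    rw [hidx] at h2
    rw [h2]; ring
  -- backward invariance
  have step2 : ∀ t, f (t - D (f t)) = f t := by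
    intro t
    have h1 := R2 t
    have h2 := R2 (t + (π - 2*arctan (f t - c)))
    rw [h1] at h2
    have hidx : t + (π - 2*arctan (f t - c)) + (π - 2*arctan (c - f t - c))
        = (t - D (f t)) + 2*π + 2*π := by
      rw [hD]
      have e1 : arctan (c - f t - c) = - arctan (f t) := by rw [← arctan_neg]; ring_nf
      have e2 : arctan (f t - c) = - arctan (c - f t) := by rw [← arctan_neg]; ring_nf
      rw [e1, e2]; ring
    rw [hidx] at h2
    have := hper (t - D (f t) + 2*π)
    have h3 : t - D (f t) + 2*π + 2*π = t - D (f t) + 2*π*2 := by ring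
    rw [hper (t - D (f t))] at this
    have hA : f (t - D (f t) + 2*π + 2*π) = f (t - D (f t)) := by
      rw [show t - D (f t) + 2*π + 2*π = (t - D (f t) + 2*π) + 2*π by ring, hper, hper]
    rw [hA] at h2
    rw [h2]; ring
  -- max of f
  have h2pi : (0:ℝ) < 2*π := by positivity
  obtain ⟨t₁, _, ht₁⟩ := isCompact_Icc.exists_isMaxOn (⟨0, le_refl 0, le_of_lt h2pi⟩ :
      (Icc (0:ℝ) (2*π)).Nonempty) hf.continuousOn
  set M := f t₁ with hM
  have hmax : ∀ t, f t ≤ M := by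
    intro t
    obtain ⟨y, hy, hfy⟩ := hperiodic.exists_mem_Ico₀ h2pi t
    rw [hfy]
    exact ht₁ ⟨hy.1, le_of_lt hy.2⟩
  have hmin : ∀ t, c - M ≤ f t := by
    intro t
    have := R1 t
    have h := hmax (t + (π - 2*arctan (f t)))
    rw [this] at h
    linarith
  have hMge : c/2 ≤ M := by have := hmin t₁; linarith
  rcases eq_or_lt_of_le hMge with hMc | hMc
  · intro t; have := hmax t; have := hmin t; rw [← hMc] at *; linarith
  -- now M > c/2 : derive a contradiction
  exfalso
  -- strict monotonicity of D on [c/2, ∞)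
  set A : ℝ → ℝ := fun s => arctan s + arctan (c - s) with hA
  have hderiv : ∀ s : ℝ, HasDerivAt A (1/(1+s^2) - 1/(1+(c-s)^2)) s := by
    intro s
    have h1 := Real.hasDerivAt_arctan s
    have hcs : HasDerivAt (fun u : ℝ => c - u) (-1) s := by
      simpa using (hasDerivAt_id s).const_sub c
    have h2 := (Real.hasDerivAt_arctan (c - s)).comp s hcs
    have h2' : HasDerivAt (fun u : ℝ => arctan (c - u)) (-(1/(1+(c-s)^2))) s := by
      exact h2.congr_deriv (by ring)
    exact (h1.add h2').congr_deriv (by ring)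
  have hAanti : StrictAntiOn A (Ici (c/2)) := by
    have hAcont : Continuous A := by
      rw [hA]
      exact Real.continuous_arctan.add
        (Real.continuous_arctan.comp (continuous_const.sub continuous_id))
    apply strictAntiOn_of_deriv_neg (convex_Ici _) hAcont.continuousOn
    intro s hs
    rw [interior_Ici] at hs
    rw [(hderiv s).deriv]
    have hs2 : (c - s)^2 < s^2 := by
      have h1 : c/2 < s := hs
      nlinarith
    have hd1 : (0:ℝ) < 1 + s^2 := by positivity
    have hd2 : (0:ℝ) < 1 + (c-s)^2 := by positivity
    have : 1/(1+s^2) < 1/(1+(c-s)^2) := by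
      apply one_div_lt_one_div_of_lt hd2
      linarith
    linarith
  have hDlt : D (c/2) < D M := by
    have := hAanti (self_mem_Ici) (mem_Ici.mpr hMge) hMc
    have hshape : ∀ s, D s = 2*π - 2 * A s := by intro s; rw [hD, hA]; ring
    rw [hshape, hshape]
    linarith
  -- choose an irrational rotation number
  obtain ⟨γ, hγirr, hγmem⟩ : ∃ γ, Irrational γ ∧ γ ∈ Ioo (D (c/2)/(2*π)) (D M/(2*π)) := by
    obtain ⟨γ, hγ1, hγ2⟩ := dense_irrational.exists_mem_open isOpen_Ioo
      (nonempty_Ioo.mpr (by apply div_lt_div_of_pos_right hDlt h2pi))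
    exact ⟨γ, hγ1, hγ2⟩
  have hγlt : D (c/2) < 2*π*γ ∧ 2*π*γ < D M := by
    obtain ⟨h1, h2⟩ := hγmem
    constructor
    · have := (div_lt_iff₀ h2pi).mp h1; linarith
    · have := (lt_div_iff₀ h2pi).mp h2; linarith
  -- find t₃ with f t₃ = c/2
  have ht₄ : f (t₁ + (π - 2*arctan M)) = c - M := by
    have := R1 t₁; rw [← hM] at this; exact this
  obtain ⟨t₃, _, ht₃⟩ : ∃ t₃ ∈ uIcc (t₁ + (π - 2*arctan M)) t₁, f t₃ = c/2 := by
    have hsub := intermediate_value_uIcc (a := t₁ + (π - 2*arctan M)) (b := t₁)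
      hf.continuousOn
    have hmem : c/2 ∈ uIcc (f (t₁ + (π - 2*arctan M))) (f t₁) := by
      rw [ht₄, ← hM]
      rw [Set.mem_uIcc]
      left; constructor <;> linarith
    obtain ⟨t₃, h1, h2⟩ := hsub hmem
    exact ⟨t₃, h1, h2⟩
  -- find t₂ with D (f t₂) = 2πγ
  obtain ⟨t₂, _, ht₂⟩ : ∃ t₂ ∈ uIcc t₃ t₁, D (f t₂) = 2*π*γ := by
    have c1 : Continuous fun t => arctan (f t) := Real.continuous_arctan.comp hf
    have c2 : Continuous fun t => arctan (c - f t) :=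
      Real.continuous_arctan.comp (continuous_const.sub hf)
    have hcont : ContinuousOn (fun t => D (f t)) (uIcc t₃ t₁) := by
      apply Continuous.continuousOn
      exact (continuous_const.sub (continuous_const.mul c1)).sub (continuous_const.mul c2)
    have hsub := intermediate_value_uIcc (a := t₃) (b := t₁) hcont
    have hmem : 2*π*γ ∈ uIcc (D (f t₃)) (D (f t₁)) := by
      rw [ht₃, ← hM, Set.mem_uIcc]
      left; exact ⟨le_of_lt hγlt.1, le_of_lt hγlt.2⟩
    obtain ⟨t₂, h1, h2⟩ := hsub hmem
    exact ⟨t₂, h1, h2⟩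
  set v := f t₂ with hv
  -- the level set of v is invariant under ±2πγ and ±2π
  have hinv1 : ∀ t, f t = v → f (t + 2*π*γ) = v := by
    intro t ht
    have : D (f t) = 2*π*γ := by rw [ht, ← hv] at *; exact ht₂
    rw [← this, step1 t, ht]
  have hinv2 : ∀ t, f t = v → f (t - 2*π*γ) = v := by
    intro t ht
    have : D (f t) = 2*π*γ := by rw [ht, ← hv] at *; exact ht₂
    rw [← this, step2 t, ht]
  have hk : ∀ k : ℤ, f (t₂ + k * (2*π*γ)) = v := by
    intro k
    induction k using Int.induction_on with
    | zero => simp [hv]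
    | succ n ih =>
        convert hinv1 _ ih using 2
        push_cast; ring
    | pred n ih =>
        convert hinv2 _ ih using 2
        push_cast; ring
  have hkj : ∀ k j : ℤ, f (t₂ + k * (2*π*γ) + j * (2*π)) = v := by
    intro k j
    have hp := (hperiodic.int_mul j) (t₂ + k * (2*π*γ))
    rw [hk k] at hp
    exact hp
  -- density of the subgroup generated by 2πγ and 2π
  set S := AddSubgroup.closure ({2*π*γ, 2*π} : Set ℝ) with hS
  have hdense : Dense (S : Set ℝ) := by
    rcases S.dense_or_cyclic with h | ⟨a, ha⟩
    · exact h
    · exfalso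
      have h1 : (2*π*γ) ∈ S := AddSubgroup.subset_closure (by simp)
      have h2 : (2*π) ∈ S := AddSubgroup.subset_closure (by simp)
      rw [ha, AddSubgroup.mem_closure_singleton] at h1 h2
      obtain ⟨m, hm⟩ := h1
      obtain ⟨n, hn⟩ := h2
      have ha0 : a ≠ 0 := by
        intro h0
        rw [h0] at hn
        simp at hn
      have hn0 : (n:ℝ) ≠ 0 := by
        intro h0
        rw [zsmul_eq_mul] at hn
        rw [h0] at hn
        simp at hn
      apply hγirr
      refine ⟨(m : ℚ)/(n : ℚ), ?_⟩
      rw [zsmul_eq_mul] at hm hn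
      have : γ = (m:ℝ)/(n:ℝ) := by
        have h2p : (2*π) ≠ 0 := by positivity
        have h3 : (2*π) * (γ * (n:ℝ)) = (2*π) * (m:ℝ) := by
          linear_combination (m:ℝ) * hn - (n:ℝ) * hm
        have h4 : γ * (n:ℝ) = (m:ℝ) := mul_left_cancel₀ h2p h3
        rw [eq_div_iff hn0]
        exact h4
      rw [this]
      push_cast
      ring
  -- the level set is closed, contains a dense set, hence everything
  have hlevel : ∀ t, f t = v := by
    intro t
    have hAcl : IsClosed (f ⁻¹' {v}) := isClosed_singleton.preimage hf
    have hsubset : (fun u => t₂ + u) '' (S : Set ℝ) ⊆ f ⁻¹' {v} := by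
      rintro _ ⟨u, hu, rfl⟩
      obtain ⟨m, n, hmn⟩ := AddSubgroup.mem_closure_pair.mp hu
      have := hkj m n
      simp only [Set.mem_preimage, Set.mem_singleton_iff]
      rw [← hmn]
      convert this using 2
      rw [zsmul_eq_mul, zsmul_eq_mul]
      ring
    have hdense2 : Dense ((fun u => t₂ + u) '' (S : Set ℝ)) := by
      have himg := (Homeomorph.addLeft t₂).image_closure (S : Set ℝ)
      rw [hdense.closure_eq, Set.image_univ, (Homeomorph.addLeft t₂).surjective.range_eq] at himg
      rw [dense_iff_closure_eq]
      have heq2 : ((Homeomorph.addLeft t₂) '' (S : Set ℝ)) = (fun u => t₂ + u) '' (S : Set ℝ) := rfl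
      rw [← heq2, ← himg]
    have hsub2 : Dense (f ⁻¹' {v}) := Dense.mono hsubset hdense2
    have huniv : f ⁻¹' {v} = Set.univ := by
      rw [← hAcl.closure_eq, hsub2.closure_eq]
    exact (Set.eq_univ_iff_forall.mp huniv t)
  -- contradiction : f t₁ = M > c/2 = f t₃ but f is constant
  have e1 := hlevel t₁
  have e2 := hlevel t₃
  linarith [hMc, hM, ht₃, e1, e2]

lemma exists_rho (hKcomp : IsCompact K) (hne : K.Nonempty)
    (hKball : K ⊆ Metric.ball (0 : E2) 1) :
    ∃ ρ : ℝ, 0 ≤ ρ ∧ ρ < 1 ∧ ∀ y ∈ K, ‖y‖ ≤ ρ := by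
  obtain ⟨y₀, hy₀, hmax⟩ := hKcomp.exists_isMaxOn hne continuous_norm.continuousOn
  refine ⟨‖y₀‖, norm_nonneg _, ?_, fun y hy => hmax hy⟩
  have := hKball hy₀
  rwa [Metric.mem_ball, dist_zero_right] at this

lemma continuous_Fn (hρ : ρ < 1) (hKcomp : IsCompact K) :
    Continuous (fun x => sSup (sig ρ x '' K)) := by
  apply hKcomp.continuous_sSup
  have hne : ∀ p : E2 × E2, max (1 - ⟪p.2, p.1⟫) (1 - ρ) ≠ 0 := fun p =>
    ne_of_gt (lt_of_lt_of_le (by linarith) (le_max_right _ _))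
  have : Continuous fun p : E2 × E2 => ⟪p.2, Jmap p.1⟫ / max (1 - ⟪p.2, p.1⟫) (1 - ρ) := by
    apply Continuous.div
    · exact Continuous.inner continuous_snd (continuous_Jmap.comp continuous_fst)
    · exact (continuous_const.sub (Continuous.inner continuous_snd continuous_fst)).max
        continuous_const
    · exact hne
  exact this

/-- the two dynamical relations -/
lemma dyn {c : ℝ} (hρ : ρ < 1) (hρ0 : 0 ≤ ρ) (hK : ∀ y ∈ K, ‖y‖ ≤ ρ)
    (hBnd : ∀ x : E2, ‖x‖ = 1 → IsGreatest (sig ρ x '' K) (sSup (sig ρ x '' K)) ∧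
      IsLeast (sig ρ x '' K) (sSup (sig ρ x '' K) - c))
    {x : E2} (hx : ‖x‖ = 1) :
    sSup (sig ρ (tau (sSup (sig ρ x '' K)) x) '' K) = c - sSup (sig ρ x '' K) ∧
    sSup (sig ρ (tau (sSup (sig ρ x '' K) - c) x) '' K) = c - sSup (sig ρ x '' K) := by
  set F := sSup (sig ρ x '' K) with hF
  obtain ⟨hG, hL⟩ := hBnd x hx
  constructor
  · -- least value at tau F x is -F
    have h1 : IsLeast (sig ρ (tau F x) '' K) (-F) := by
      constructor
      · obtain ⟨z₀, hz₀, hz₀v⟩ := hG.1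
        exact ⟨z₀, hz₀, (master_eq hρ hρ0 hx (hK z₀ hz₀) F).mp hz₀v⟩
      · rintro _ ⟨y, hy, rfl⟩
        exact (master_le hρ hρ0 hx (hK y hy) F).mp (hG.2 ⟨y, hy, rfl⟩)
    have hτ : ‖tau F x‖ = 1 := norm_tau hx F
    obtain ⟨hG', hL'⟩ := hBnd _ hτ
    have := hL'.unique h1
    linarith
  · -- greatest value at tau (F - c) x is -(F - c)
    have h2 : IsGreatest (sig ρ (tau (F - c) x) '' K) (-(F - c)) := by
      constructor
      · obtain ⟨z₀, hz₀, hz₀v⟩ := hL.1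
        exact ⟨z₀, hz₀, (master_eq hρ hρ0 hx (hK z₀ hz₀) (F - c)).mp hz₀v⟩
      · rintro _ ⟨y, hy, rfl⟩
        exact (master_ge hρ hρ0 hx (hK y hy) (F - c)).mp (hL.2 ⟨y, hy, rfl⟩)
    have hτ : ‖tau (F - c) x‖ = 1 := norm_tau hx (F - c)
    obtain ⟨hG', hL'⟩ := hBnd _ hτ
    have := hG'.csSup_eq
    rw [this] at *
    linarith [hG'.unique h2]

lemma xt_surj {x : E2} (hx : ‖x‖ = 1) : ∃ t : ℝ, xt t = x := by
  set z : ℂ := (x 0 : ℂ) + (x 1 : ℂ) * Complex.I with hz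
  have habs : ‖z‖ = 1 := by
    rw [hz, Complex.norm_add_mul_I]
    rw [← norm_sq_formula, hx]
    simp
  have hz0 : z ≠ 0 := by
    intro h
    rw [h] at habs
    simp at habs
  refine ⟨z.arg, ext2 ?_ ?_⟩
  · have := Complex.cos_arg hz0
    rw [habs] at this
    simpa [xt, hz] using this
  · have := Complex.sin_arg z
    rw [habs] at this
    simpa [xt, hz] using this

section final
variable {ρ c : ℝ} {K : Set E2}

/-- halfplane reformulation -/
lemma halfplane (hρ : ρ < 1) {x y : E2} (hx : ‖x‖ = 1) (hy : ‖y‖ ≤ ρ) (s : ℝ) :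
    (sig ρ x y ≤ s ↔ ⟪y, s • x + Jmap x⟫ ≤ s) ∧
    (sig ρ x y = s → ⟪y, s • x + Jmap x⟫ = s) := by
  have hp := one_sub_pos hρ hx hy
  have hinner : ⟪y, s • x + Jmap x⟫ = s * ⟪y, x⟫ + ⟪y, Jmap x⟫ := by
    rw [inner_add_right, real_inner_smul_right]
  rw [sig_eq hx hy]
  constructor
  · rw [div_le_iff₀ hp, hinner]
    constructor <;> intro h <;> nlinarith
  · intro h
    rw [div_eq_iff (ne_of_gt hp)] at h
    rw [hinner]
    nlinarith
lemma vec_construct (hc : 0 < c) {n : E2} (hn : ‖n‖ = 1) :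
    ∃ x : E2, ‖x‖ = 1 ∧ (c/2) • x + Jmap x = Real.sqrt (1 + (c/2)^2) • n := by
  set ν := Real.sqrt (1 + (c/2)^2) with hν
  have hν2 : ν^2 = 1 + (c/2)^2 := sq_sqrt (by positivity)
  have hνpos : 0 < ν := Real.sqrt_pos.mpr (by positivity)
  have hnn : ⟪n, n⟫ = 1 := by rw [real_inner_self_eq_norm_sq, hn]; norm_num
  have hnJ : ⟪n, Jmap n⟫ = 0 := inner_J_self n
  have hJn : ⟪Jmap n, n⟫ = 0 := by rw [real_inner_comm]; exact hnJ
  have hJJ : ⟪Jmap n, Jmap n⟫ = 1 := by rw [inner_J_J]; exact hnn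
  set W : E2 := (c/2) • n - Jmap n with hW
  have hWnorm : ‖W‖ = ν := by
    have h1 : ⟪W, W⟫ = (c/2)^2 + 1 := by
      rw [hW, inner_sub_left, inner_sub_right, inner_sub_right, real_inner_smul_left,
        real_inner_smul_left, real_inner_smul_right, real_inner_smul_right, hnn, hnJ, hJn, hJJ]
      ring
    have h2 : ‖W‖^2 = ν^2 := by
      rw [← real_inner_self_eq_norm_sq, h1, hν2]; ring
    nlinarith [norm_nonneg W, hνpos]
  refine ⟨ν⁻¹ • W, ?_, ?_⟩
  · rw [norm_smul, hWnorm]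
    simp [abs_of_pos hνpos]
    exact inv_mul_cancel₀ (ne_of_gt hνpos)
  · have hJW : Jmap W = (c/2) • Jmap n + n := by
      rw [hW, Jmap_sub, Jmap_smul, Jmap_Jmap]
      abel
    rw [Jmap_smul, hJW, hW]
    have key : ν⁻¹ * ((c/2) * (c/2)) + ν⁻¹ = ν := by
      have hne : ν ≠ 0 := ne_of_gt hνpos
      field_simp
      nlinarith [hν2]
    match_scalars
    · linarith [key]
    · ring
end final

lemma ball_char {ρ c : ℝ} {K : Set E2} (hρ : ρ < 1) (hc : 0 < c)
    (hKcomp : IsCompact K) (hKconv : Convex ℝ K) (hKne : K.Nonempty)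
    (hK : ∀ y ∈ K, ‖y‖ ≤ ρ)
    (hBnd2 : ∀ x : E2, ‖x‖ = 1 → IsGreatest (sig ρ x '' K) (c/2)) :
    K = Metric.closedBall (0 : E2) ((c/2) / Real.sqrt (1 + (c/2)^2)) := by
  set ν := Real.sqrt (1 + (c/2)^2) with hν
  have hν2 : ν^2 = 1 + (c/2)^2 := sq_sqrt (by positivity)
  have hνpos : 0 < ν := Real.sqrt_pos.mpr (by positivity)
  set r := (c/2) / ν with hr
  have hrpos : 0 < r := by positivity
  -- the two key facts
  have fact1 : ∀ y ∈ K, ∀ n : E2, ‖n‖ = 1 → ⟪y, n⟫ ≤ r := by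
    intro y hy n hn
    obtain ⟨x, hx1, hx2⟩ := vec_construct hc hn
    have hle : sig ρ x y ≤ c/2 := (hBnd2 x hx1).2 ⟨y, hy, rfl⟩
    have := ((halfplane hρ hx1 (hK y hy) (c/2)).1).mp hle
    rw [hx2, real_inner_smul_right] at this
    rw [hr, le_div_iff₀ hνpos, mul_comm]
    linarith
  have fact2 : ∀ n : E2, ‖n‖ = 1 → ∃ z ∈ K, ⟪z, n⟫ = r := by
    intro n hn
    obtain ⟨x, hx1, hx2⟩ := vec_construct hc hn
    obtain ⟨_, ⟨z, hz, rfl⟩, hzv⟩ : ∃ w ∈ sig ρ x '' K, w = c/2 := by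
      obtain ⟨hmem, _⟩ := hBnd2 x hx1
      exact ⟨c/2, hmem, rfl⟩
    refine ⟨z, hz, ?_⟩
    have := ((halfplane hρ hx1 (hK z hz) (c/2)).2) hzv
    rw [hx2, real_inner_smul_right] at this
    rw [hr, eq_div_iff (ne_of_gt hνpos)]
    linarith
  apply Set.eq_of_subset_of_subset
  · intro y hy
    rw [Metric.mem_closedBall, dist_zero_right]
    rcases eq_or_ne y 0 with h0 | h0
    · rw [h0, norm_zero]; positivity
    · have hn : ‖(‖y‖⁻¹ • y : E2)‖ = 1 := by
        rw [norm_smul, norm_inv, norm_norm]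
        exact inv_mul_cancel₀ (norm_ne_zero_iff.mpr h0)
      have := fact1 y hy _ hn
      rw [real_inner_smul_right, real_inner_self_eq_norm_sq] at this
      have hy0 : (0:ℝ) < ‖y‖ := norm_pos_iff.mpr h0
      calc ‖y‖ = ‖y‖⁻¹ * ‖y‖^2 := by
            rw [pow_two, ← mul_assoc, inv_mul_cancel₀ (ne_of_gt hy0), one_mul]
        _ ≤ r := this
  · intro y₀ hy₀
    by_contra hyK
    obtain ⟨f, u, hfa, hfu⟩ := geometric_hahn_banach_closed_point hKconv hKcomp.isClosed hyK
    set w₀ := (InnerProductSpace.toDual ℝ E2).symm f with hw₀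
    have hwf : ∀ z : E2, ⟪w₀, z⟫ = f z := by
      intro z
      rw [hw₀]
      exact InnerProductSpace.toDual_symm_apply
    have hw0 : w₀ ≠ 0 := by
      intro h
      obtain ⟨z₁, hz₁⟩ := hKne
      have h1 := hfa z₁ hz₁
      have e1 : f z₁ = 0 := by rw [← hwf, h, inner_zero_left]
      have e2 : f y₀ = 0 := by rw [← hwf, h, inner_zero_left]
      rw [e1] at h1; rw [e2] at hfu
      linarith
    have hn : ‖(‖w₀‖⁻¹ • w₀ : E2)‖ = 1 := by
      rw [norm_smul, norm_inv, norm_norm]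
      exact inv_mul_cancel₀ (norm_ne_zero_iff.mpr hw0)
    obtain ⟨z, hz, hzr⟩ := fact2 _ hn
    have hwpos : (0:ℝ) < ‖w₀‖ := norm_pos_iff.mpr hw0
    have hzw : ⟪z, w₀⟫ = r * ‖w₀‖ := by
      rw [real_inner_smul_right] at hzr
      set q := ⟪z, w₀⟫ with hqd
      have hne : ‖w₀‖ ≠ 0 := ne_of_gt hwpos
      field_simp at hzr
      linarith
    have hy₀r : ‖y₀‖ ≤ r := by rwa [Metric.mem_closedBall, dist_zero_right] at hy₀
    have hfy₀ : f y₀ ≤ r * ‖w₀‖ := by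
      rw [← hwf]
      calc ⟪w₀, y₀⟫ ≤ ‖w₀‖ * ‖y₀‖ := real_inner_le_norm _ _
        _ ≤ ‖w₀‖ * r := by nlinarith
        _ = r * ‖w₀‖ := by ring
    have hfz : f z = r * ‖w₀‖ := by
      rw [← hwf, real_inner_comm]
      exact hzw
    have := hfa z hz
    rw [hfz] at this
    linarith


/-- a convex body inside the open unit disc of `ℝ²` such that for every
unit vector `x` the central projection `C(K,x) ∩ x^⊥` is a segment of a fixed constant
length is a Euclidean disc centered at the origin. -/
theorem stmt_6
    (K : Set (EuclideanSpace ℝ (Fin 2)))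
    (hKcomp : IsCompact K) (hKconv : Convex ℝ K) (hKint : (interior K).Nonempty)
    (hKball : K ⊆ Metric.ball (0 : EuclideanSpace ℝ (Fin 2)) 1)
    (c : ℝ) (hc : 0 < c)
    (hyp : ∀ x ∈ Metric.sphere (0 : EuclideanSpace ℝ (Fin 2)) 1,
      ∃ a b : EuclideanSpace ℝ (Fin 2),
        coneGen K x ∩ {z | ⟪z, x⟫ = 0} = segment ℝ a b ∧ dist a b = c) :
    ∃ r > 0, K = Metric.closedBall (0 : EuclideanSpace ℝ (Fin 2)) r := by
  obtain ⟨p, hp⟩ := hKint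
  have hKne : K.Nonempty := ⟨p, interior_subset hp⟩
  obtain ⟨ρ, hρ0, hρ, hK⟩ := exists_rho hKcomp hKne hKball
  have hBnd : ∀ x : E2, ‖x‖ = 1 → IsGreatest (sig ρ x '' K) (sSup (sig ρ x '' K)) ∧
      IsLeast (sig ρ x '' K) (sSup (sig ρ x '' K) - c) := by
    intro x hx
    obtain ⟨a, b, hseg, hdist⟩ := hyp x (by rwa [mem_sphere_zero_iff_norm])
    obtain ⟨F, hG, hL⟩ := bounds_aux hρ hx hK hseg hdist
    have hFs : sSup (sig ρ x '' K) = F := hG.csSup_eq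
    rw [hFs]
    exact ⟨hG, hL⟩
  set f : ℝ → ℝ := fun t => sSup (sig ρ (xt t) '' K) with hf
  have hfcont : Continuous f := (continuous_Fn hρ hKcomp).comp continuous_xt
  have hper : ∀ t, f (t + 2*π) = f t := by
    intro t
    simp only [hf]
    rw [xt_per]
  have R1 : ∀ t, f (t + (π - 2*arctan (f t))) = c - f t := by
    intro t
    have hd := (dyn hρ hρ0 hK hBnd (norm_xt t)).1
    rw [tau_xt] at hd
    exact hd
  have R2 : ∀ t, f (t + (π - 2*arctan (f t - c))) = c - f t := by
    intro t
    have hd := (dyn hρ hρ0 hK hBnd (norm_xt t)).2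
    rw [tau_xt] at hd
    exact hd
  have hhalf := endgame hc hfcont hper R1 R2
  have hBnd2g : ∀ x : E2, ‖x‖ = 1 → IsGreatest (sig ρ x '' K) (c/2) := by
    intro x hx
    obtain ⟨t, rfl⟩ := xt_surj hx
    have hgr := (hBnd _ hx).1
    have he : sSup (sig ρ (xt t) '' K) = c / 2 := hhalf t
    rwa [he] at hgr
  have hfinal := ball_char hρ hc hKcomp hKconv hKne hK hBnd2g
  exact ⟨(c/2) / Real.sqrt (1 + (c/2)^2), by positivity, hfinal⟩

end StmtsAux
end

section
/- (Hammer's symmetry criterion) Let K ⊂ ℝ^n (n ≥ 2) be a convex body and q ∈ int K. If for every line l through q there exist parallel supporting hyperplanes of K at the two points of l ∩ ∂K, then K is centrally symmetric with centre q. -/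
open scoped RealInnerProductSpace
open MeasureTheory Filter Set Metric Topology Real

section aux

lemma le_of_lipschitz_ae_deriv_zero {f : ℝ → ℝ} {C : NNReal} (hf : LipschitzWith C f)
    (hd : ∀ᵐ θ, HasDerivAt f 0 θ) {a b : ℝ} (hab : a ≤ b) : f a ≤ f b := by
  set G : ℝ → ℝ := fun x => f x + (C : ℝ) * x with hG
  have hGmono : Monotone G := by
    intro x y hxy
    have h1 := hf.dist_le_mul x y
    rw [Real.dist_eq, Real.dist_eq] at h1
    have h2 : f x - f y ≤ (C : ℝ) * (y - x) := by
      have := (le_abs_self (f x - f y)).trans h1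
      have hxy' : |x - y| = y - x := by
        rw [abs_of_nonpos (by linarith)]; ring
      rw [hxy'] at this; linarith
    simp only [hG]; linarith
  have hGcont : Continuous G := hf.continuous.add (by continuity)
  have hGst_eq : ∀ x, hGmono.stieltjesFunction x = G x := by
    intro x
    rw [hGmono.stieltjesFunction_eq]
    exact rightLim_eq_of_tendsto
      ((hGcont.tendsto x).mono_left nhdsWithin_le_nhds)
  set μ := hGmono.stieltjesFunction.measure with hμ
  have hG' : ∀ᵐ x, HasDerivAt G (C : ℝ) x := by
    filter_upwards [hd] with x hx
    have := hx.add (((hasDerivAt_id x).const_mul (C : ℝ)))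
    rw [zero_add, mul_one] at this; exact this
  have hrn : ∀ᵐ x, (μ.rnDeriv volume x).toReal = (C : ℝ) := by
    filter_upwards [hGmono.ae_hasDerivAt, hG'] with x h1 h2
    exact h1.unique h2
  have hlt : ∀ᵐ x, μ.rnDeriv volume x < ⊤ := Measure.rnDeriv_lt_top μ volume
  have hofReal : ∀ᵐ x, μ.rnDeriv volume x = ENNReal.ofReal (C : ℝ) := by
    filter_upwards [hrn, hlt] with x h1 h2
    rw [← h1, ENNReal.ofReal_toReal h2.ne]
  have hle : ENNReal.ofReal ((C : ℝ) * (b - a)) ≤ ENNReal.ofReal (G b - G a) := by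
    have h1 : ∫⁻ x in Ioc a b, μ.rnDeriv volume x
        = ENNReal.ofReal (C : ℝ) * volume (Ioc a b) := by
      rw [lintegral_congr_ae (ae_restrict_of_ae hofReal)]
      simp
    have h2 : volume.withDensity (μ.rnDeriv volume) (Ioc a b) ≤ μ (Ioc a b) :=
      Measure.le_iff'.1 (Measure.withDensity_rnDeriv_le μ volume) _
    rw [withDensity_apply _ measurableSet_Ioc, h1] at h2
    have h3 : μ (Ioc a b) = ENNReal.ofReal (G b - G a) := by
      rw [hμ, StieltjesFunction.measure_Ioc, hGst_eq, hGst_eq]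
    rw [h3] at h2
    calc ENNReal.ofReal ((C : ℝ) * (b - a))
        = ENNReal.ofReal (C : ℝ) * ENNReal.ofReal (b - a) :=
          ENNReal.ofReal_mul (by positivity)
      _ = ENNReal.ofReal (C : ℝ) * volume (Ioc a b) := by rw [Real.volume_Ioc]
      _ ≤ ENNReal.ofReal (G b - G a) := h2
  have hGba : G a ≤ G b := hGmono hab
  have := (ENNReal.ofReal_le_ofReal_iff (by linarith)).1 hle
  simp only [hG] at this; linarith

lemma eq_of_lipschitz_ae_deriv_zero {f : ℝ → ℝ} {C : NNReal} (hf : LipschitzWith C f)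
    (hd : ∀ᵐ θ, HasDerivAt f 0 θ) (a b : ℝ) : f a = f b := by
  wlog hab : a ≤ b generalizing a b
  · exact (this b a (le_of_not_ge hab)).symm
  refine le_antisymm (le_of_lipschitz_ae_deriv_zero hf hd hab) ?_
  have hneg : ∀ᵐ θ, HasDerivAt (fun x => -f x) 0 θ := by
    filter_upwards [hd] with x hx; have := hx.neg; rw [neg_zero] at this; exact this
  have := le_of_lipschitz_ae_deriv_zero (hf.neg (α := ℝ)) hneg hab
  simpa using this

/-- build a Lipschitz constant from a real bound -/
lemma lipschitzWith_of_abs_le {f : ℝ → ℝ} {c : ℝ} (hc : 0 ≤ c)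
    (h : ∀ x y, |f x - f y| ≤ c * |x - y|) : LipschitzWith c.toNNReal f := by
  refine LipschitzWith.of_dist_le_mul fun x y => ?_
  rw [Real.dist_eq, Real.dist_eq, Real.coe_toNNReal c hc]
  exact h x y

lemma abs_cos_sub_cos_le' (a b : ℝ) : |Real.cos a - Real.cos b| ≤ |a - b| := by
  rw [Real.cos_sub_cos, abs_mul, abs_mul]
  have h1 : |Real.sin ((a + b) / 2)| ≤ 1 := abs_le.2 ⟨Real.neg_one_le_sin _, Real.sin_le_one _⟩
  have h2 : |Real.sin ((a - b) / 2)| ≤ |(a - b) / 2| := Real.abs_sin_le_abs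
  have h3 : |(a - b) / 2| = |a - b| / 2 := by rw [abs_div]; norm_num
  have h4 : |(-2 : ℝ)| = 2 := by norm_num
  rw [h4]
  nlinarith [abs_nonneg (Real.sin ((a + b) / 2)), abs_nonneg (Real.sin ((a - b) / 2)),
    abs_nonneg (a - b)]

lemma abs_sin_sub_sin_le' (a b : ℝ) : |Real.sin a - Real.sin b| ≤ |a - b| := by
  rw [Real.sin_sub_sin, abs_mul, abs_mul]
  have h1 : |Real.cos ((a + b) / 2)| ≤ 1 := abs_le.2 ⟨Real.neg_one_le_cos _, Real.cos_le_one _⟩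
  have h2 : |Real.sin ((a - b) / 2)| ≤ |(a - b) / 2| := Real.abs_sin_le_abs
  have h3 : |(a - b) / 2| = |a - b| / 2 := by rw [abs_div]; norm_num
  have h4 : |(2 : ℝ)| = 2 := by norm_num
  rw [h4]
  nlinarith [abs_nonneg (Real.sin ((a - b) / 2)), abs_nonneg (Real.cos ((a + b) / 2)),
    abs_nonneg (a - b)]

end aux

set_option maxHeartbeats 1000000 in
/-- Hammer's symmetry criterion: if `K ⊆ ℝⁿ` (`n ≥ 2`) is a convex body,
`q ∈ int K`, and for every line through `q` there exist parallel supporting hyperplanes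
of `K` at the two points where the line meets `∂K`, then `K` is centrally symmetric
with centre `q`. -/
theorem stmt_9 {n : ℕ} (hn : 2 ≤ n)
    (K : Set (EuclideanSpace ℝ (Fin n)))
    (hKcomp : IsCompact K) (hKconv : Convex ℝ K) (hKint : (interior K).Nonempty)
    (q : EuclideanSpace ℝ (Fin n)) (hq : q ∈ interior K)
    (hyp : ∀ v : EuclideanSpace ℝ (Fin n), v ≠ 0 →
      ∀ a ∈ frontier K, ∀ b ∈ frontier K,
        (∃ t : ℝ, a = q + t • v) → (∃ s : ℝ, b = q + s • v) → a ≠ b →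
        ∃ w : EuclideanSpace ℝ (Fin n), w ≠ 0 ∧
          (∀ y ∈ K, ⟪y - a, w⟫ ≤ 0) ∧ (∀ y ∈ K, 0 ≤ ⟪y - b, w⟫)) :
    ∀ z, z ∈ K ↔ q + (q - z) ∈ K := by
  classical
  set L : Set (EuclideanSpace ℝ (Fin n)) := (Homeomorph.addLeft q) ⁻¹' K with hLdef
  have hmemL : ∀ x : EuclideanSpace ℝ (Fin n), x ∈ L ↔ q + x ∈ K := fun x => Iff.rfl
  have hLconv : Convex ℝ L := by
    intro x hx y hy a b ha hb hab
    have he : q + (a • x + b • y) = a • (q + x) + b • (q + y) := by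
      rw [smul_add, smul_add, add_add_add_comm, ← add_smul, hab, one_smul]
    show q + _ ∈ K
    rw [he]
    exact hKconv hx hy ha hb hab
  have hLclosed : IsClosed L := hKcomp.isClosed.preimage (Homeomorph.addLeft q).continuous
  have hLcomp : IsCompact L := (Homeomorph.addLeft q).isCompact_preimage.2 hKcomp
  have hL0 : (0 : EuclideanSpace ℝ (Fin n)) ∈ interior L := by
    rw [hLdef, ← Homeomorph.preimage_interior]
    show q + 0 ∈ interior K
    simpa using hq
  have hLnhds : L ∈ 𝓝 (0 : EuclideanSpace ℝ (Fin n)) := mem_interior_iff_mem_nhds.1 hL0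
  have hfrontL : ∀ x : EuclideanSpace ℝ (Fin n), x ∈ frontier L → q + x ∈ frontier K := by
    intro x hx
    rw [hLdef, ← Homeomorph.preimage_frontier] at hx
    exact hx
  obtain ⟨ε, hε, hball⟩ : ∃ ε > 0, ball (0 : EuclideanSpace ℝ (Fin n)) ε ⊆ L :=
    Metric.mem_nhds_iff.1 hLnhds
  obtain ⟨R0, hR0⟩ := hLcomp.isBounded.subset_closedBall (0 : EuclideanSpace ℝ (Fin n))
  set R : ℝ := max R0 1 with hRdef
  have hR : (0 : ℝ) < R := lt_of_lt_of_le one_pos (le_max_right _ _)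
  have hsubR : L ⊆ closedBall 0 R :=
    hR0.trans (closedBall_subset_closedBall (le_max_left _ _))
  have habs : Absorbent ℝ L := absorbent_nhds_zero hLnhds
  have hmem_iff : ∀ x : EuclideanSpace ℝ (Fin n), x ∈ L ↔ gauge L x ≤ 1 := by
    intro x
    rw [gauge_le_one_iff_mem_closure hLconv hLnhds, hLclosed.closure_eq]
  have hfront_iff : ∀ x : EuclideanSpace ℝ (Fin n), gauge L x = 1 → x ∈ frontier L :=
    fun x hx => (gauge_eq_one_iff_mem_frontier hLconv hLnhds).1 hx
  have hg_low : ∀ x : EuclideanSpace ℝ (Fin n), ‖x‖ / R ≤ gauge L x :=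
    fun x => le_gauge_of_subset_closedBall habs hR.le hsubR
  have hg_pos : ∀ x : EuclideanSpace ℝ (Fin n), x ≠ 0 → 0 < gauge L x :=
    fun x hx => lt_of_lt_of_le (div_pos (norm_pos_iff.2 hx) hR) (hg_low x)

  have main : ∀ u : EuclideanSpace ℝ (Fin n), u ≠ 0 → gauge L (-u) = gauge L u := by
    intro u hu
    -- an orthogonal vector of the same norm
    obtain ⟨v, hvu, hvnorm⟩ : ∃ v : EuclideanSpace ℝ (Fin n), ⟪u, v⟫ = 0 ∧ ‖v‖ = ‖u‖ := by
      obtain ⟨v0, hv0mem, hv0ne⟩ : ∃ v0 ∈ (ℝ ∙ u)ᗮ, v0 ≠ (0 : EuclideanSpace ℝ (Fin n)) := by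
        apply Submodule.exists_mem_ne_zero_of_ne_bot
        intro hbot
        have h1 : Module.finrank ℝ (ℝ ∙ u) = 1 := finrank_span_singleton hu
        have h2 := Submodule.finrank_add_finrank_orthogonal (K := (ℝ ∙ u)) (𝕜 := ℝ)
        rw [hbot, h1, finrank_bot, finrank_euclideanSpace_fin] at h2
        omega
      have hv0n : ‖v0‖ ≠ 0 := norm_ne_zero_iff.2 hv0ne
      refine ⟨(‖u‖ / ‖v0‖) • v0, ?_, ?_⟩
      · rw [real_inner_smul_right,
          (Submodule.mem_orthogonal _ _).1 hv0mem u (Submodule.mem_span_singleton_self u)]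
        ring
      · rw [norm_smul, Real.norm_eq_abs, abs_of_nonneg (by positivity), div_mul_cancel₀ _ hv0n]
    set U : ℝ → EuclideanSpace ℝ (Fin n) := fun θ => Real.cos θ • u + Real.sin θ • v with hUdef
    have hUnorm : ∀ θ, ‖U θ‖ = ‖u‖ := by
      intro θ
      have h1 : ‖U θ‖ ^ 2 = Real.cos θ ^ 2 * ‖u‖ ^ 2 + Real.sin θ ^ 2 * ‖v‖ ^ 2 := by
        rw [← real_inner_self_eq_norm_sq, ← real_inner_self_eq_norm_sq,
          ← real_inner_self_eq_norm_sq]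
        simp only [hUdef]
        rw [real_inner_add_add_self, real_inner_smul_left, real_inner_smul_right,
          real_inner_smul_left, real_inner_smul_right, real_inner_smul_left,
          real_inner_smul_right, hvu]
        ring
      have h2 : ‖U θ‖ ^ 2 = ‖u‖ ^ 2 := by
        rw [h1, hvnorm]
        linear_combination (Real.sin_sq_add_cos_sq θ) * ‖u‖ ^ 2
      rw [← Real.sqrt_sq (norm_nonneg (U θ)), h2, Real.sqrt_sq (norm_nonneg u)]
    have hUne : ∀ θ, U θ ≠ 0 := by
      intro θ h
      apply hu
      have h2 := hUnorm θ
      rw [h, norm_zero] at h2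
      exact norm_eq_zero.1 h2.symm
    have hUpi : ∀ θ, U (θ + π) = -U θ := by
      intro θ
      simp only [hUdef, Real.cos_add_pi, Real.sin_add_pi, neg_smul, neg_add]
    set φ : ℝ → ℝ := fun θ => gauge L (U θ) with hφdef
    have hφpos : ∀ θ, 0 < φ θ := fun θ => hg_pos _ (hUne θ)
    have hφlb : ∀ θ, ‖u‖ / R ≤ φ θ := by
      intro θ
      have h2 := hg_low (U θ)
      rwa [hUnorm θ] at h2
    have hφub : ∀ θ, φ θ ≤ ‖u‖ / ε := by
      intro θ
      have h2 : ε * gauge L (U θ) ≤ ‖U θ‖ := mul_gauge_le_norm hball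
      rw [hUnorm θ] at h2
      rw [le_div_iff₀ hε]
      linarith [h2]
    set εn : NNReal := ⟨ε, hε.le⟩ with hεn
    have hεn0 : (0 : NNReal) < εn := by
      rw [← NNReal.coe_lt_coe]
      exact hε
    have hgl : LipschitzWith εn⁻¹ (gauge L) := hLconv.lipschitzWith_gauge hεn0 hball
    have hUdist : ∀ θ₁ θ₂ : ℝ, ‖U θ₁ - U θ₂‖ ≤ 2 * ‖u‖ * |θ₁ - θ₂| := by
      intro θ₁ θ₂
      have he : U θ₁ - U θ₂
          = (Real.cos θ₁ - Real.cos θ₂) • u + (Real.sin θ₁ - Real.sin θ₂) • v := by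
        simp only [hUdef, sub_smul]
        abel
      rw [he]
      calc ‖(Real.cos θ₁ - Real.cos θ₂) • u + (Real.sin θ₁ - Real.sin θ₂) • v‖
          ≤ ‖(Real.cos θ₁ - Real.cos θ₂) • u‖ + ‖(Real.sin θ₁ - Real.sin θ₂) • v‖ :=
            norm_add_le _ _
        _ = |Real.cos θ₁ - Real.cos θ₂| * ‖u‖ + |Real.sin θ₁ - Real.sin θ₂| * ‖v‖ := by
            rw [norm_smul, norm_smul, Real.norm_eq_abs, Real.norm_eq_abs]
        _ ≤ |θ₁ - θ₂| * ‖u‖ + |θ₁ - θ₂| * ‖u‖ := by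
            rw [hvnorm]
            have g1 := abs_cos_sub_cos_le' θ₁ θ₂
            have g2 := abs_sin_sub_sin_le' θ₁ θ₂
            have hn0 := norm_nonneg u
            nlinarith [abs_nonneg (Real.cos θ₁ - Real.cos θ₂),
              abs_nonneg (Real.sin θ₁ - Real.sin θ₂)]
        _ = 2 * ‖u‖ * |θ₁ - θ₂| := by ring
    have hφlip : ∀ θ₁ θ₂ : ℝ, |φ θ₁ - φ θ₂| ≤ (2 * ‖u‖ / ε) * |θ₁ - θ₂| := by
      intro θ₁ θ₂
      have h1 := hgl.dist_le_mul (U θ₁) (U θ₂)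
      rw [Real.dist_eq, dist_eq_norm] at h1
      have h2 : ((εn⁻¹ : NNReal) : ℝ) = ε⁻¹ := by
        rw [NNReal.coe_inv]
        rfl
      rw [h2] at h1
      have h3 : ε⁻¹ * ‖U θ₁ - U θ₂‖ ≤ ε⁻¹ * (2 * ‖u‖ * |θ₁ - θ₂|) := by
        apply mul_le_mul_of_nonneg_left (hUdist θ₁ θ₂) (by positivity)
      calc |φ θ₁ - φ θ₂| ≤ ε⁻¹ * ‖U θ₁ - U θ₂‖ := h1
        _ ≤ ε⁻¹ * (2 * ‖u‖ * |θ₁ - θ₂|) := h3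
        _ = (2 * ‖u‖ / ε) * |θ₁ - θ₂| := by field_simp
    have hφlipW : LipschitzWith (2 * ‖u‖ / ε).toNNReal φ :=
      lipschitzWith_of_abs_le (by positivity) hφlip
    have hφdiff : ∀ᵐ θ, DifferentiableAt ℝ φ θ := hφlipW.ae_differentiableAt
    have hφdiff' : ∀ᵐ θ, DifferentiableAt ℝ φ (θ + π) :=
      (measurePreserving_add_right volume π).quasiMeasurePreserving.ae hφdiff
    -- the key pointwise identity coming from the hypothesis `hyp`
    have key : ∀ θ₀, DifferentiableAt ℝ φ θ₀ → DifferentiableAt ℝ φ (θ₀ + π) →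
        deriv φ (θ₀ + π) * φ θ₀ = φ (θ₀ + π) * deriv φ θ₀ := by
      intro θ₀ hd₀ hd₁
      set z : ℝ → EuclideanSpace ℝ (Fin n) := fun θ => (φ θ)⁻¹ • U θ with hz
      have hgx : ∀ θ, gauge L (z θ) = 1 := by
        intro θ
        rw [hz]
        simp only
        rw [gauge_smul_of_nonneg (inv_nonneg.2 (hφpos θ).le)]
        simp only [smul_eq_mul]
        exact inv_mul_cancel₀ (hφpos θ).ne'
      have hmemx : ∀ θ, q + z θ ∈ K := by
        intro θ
        rw [← hmemL, hmem_iff, hgx θ]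
      have hfx₀ : q + z θ₀ ∈ frontier K := hfrontL _ (hfront_iff _ (hgx θ₀))
      have hfx₁ : q + z (θ₀ + π) ∈ frontier K := hfrontL _ (hfront_iff _ (hgx (θ₀ + π)))
      have hz1 : z (θ₀ + π) = (-(φ (θ₀ + π))⁻¹) • U θ₀ := by
        rw [hz]
        simp only
        rw [hUpi θ₀, smul_neg, neg_smul]
      have hne : q + z θ₀ ≠ q + z (θ₀ + π) := by
        intro h
        have h2 : z θ₀ = z (θ₀ + π) := add_left_cancel h
        rw [hz1, hz] at h2
        simp only at h2
        have h3 : ((φ θ₀)⁻¹ + (φ (θ₀ + π))⁻¹) • U θ₀ = 0 := by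
          rw [add_smul, h2]
          simp [neg_smul]
        rcases smul_eq_zero.1 h3 with h4 | h4
        · have h5 : 0 < (φ θ₀)⁻¹ + (φ (θ₀ + π))⁻¹ :=
            add_pos (inv_pos.2 (hφpos θ₀)) (inv_pos.2 (hφpos (θ₀ + π)))
          linarith [h5]
        · exact hUne θ₀ h4
      obtain ⟨w, hw0, Ha, Hb⟩ := hyp (U θ₀) (hUne θ₀) (q + z θ₀) hfx₀ (q + z (θ₀ + π)) hfx₁
        ⟨(φ θ₀)⁻¹, rfl⟩ ⟨-(φ (θ₀ + π))⁻¹, by rw [hz1]⟩ hne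
      set c1 : ℝ := ⟪u, w⟫ with hc1
      set c2 : ℝ := ⟪v, w⟫ with hc2
      have hcθ : ∀ θ, ⟪U θ, w⟫ = Real.cos θ * c1 + Real.sin θ * c2 := by
        intro θ
        rw [hUdef]
        simp only
        rw [inner_add_left, real_inner_smul_left, real_inner_smul_left]
      set A : ℝ → ℝ := fun θ => (Real.cos θ * c1 + Real.sin θ * c2) / φ θ with hA
      have hAval : ∀ θ, ⟪z θ, w⟫ = A θ := by
        intro θ
        rw [hz]
        simp only
        rw [real_inner_smul_left, hcθ θ, hA]
        simp only
        rw [div_eq_inv_mul]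
      have hmax : ∀ θ, A θ ≤ A θ₀ := by
        intro θ
        have h := Ha _ (hmemx θ)
        have he : q + z θ - (q + z θ₀) = z θ - z θ₀ := by abel
        rw [he, inner_sub_left, hAval, hAval] at h
        linarith
      have hmin : ∀ θ, A (θ₀ + π) ≤ A θ := by
        intro θ
        have h := Hb _ (hmemx θ)
        have he : q + z θ - (q + z (θ₀ + π)) = z θ - z (θ₀ + π) := by abel
        rw [he, inner_sub_left, hAval, hAval] at h
        linarith
      have hwn : 0 < ‖w‖ := norm_pos_iff.2 hw0
      have hwpos : 0 < Real.cos θ₀ * c1 + Real.sin θ₀ * c2 := by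
        have hyw : q + (ε / (2 * ‖w‖)) • w ∈ K := by
          rw [← hmemL]
          apply hball
          rw [mem_ball_zero_iff, norm_smul, Real.norm_eq_abs,
            abs_of_nonneg (by positivity : (0:ℝ) ≤ ε / (2 * ‖w‖))]
          rw [div_mul_eq_mul_div, mul_comm]
          rw [div_lt_iff₀ (by positivity : (0:ℝ) < 2 * ‖w‖)]
          nlinarith [hwn, hε]
        have h := Ha _ hyw
        have he : q + (ε / (2 * ‖w‖)) • w - (q + z θ₀) = (ε / (2 * ‖w‖)) • w - z θ₀ := by abel
        rw [he, inner_sub_left, real_inner_smul_left, real_inner_self_eq_norm_sq, hAval] at h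
        have h2 : 0 < ε / (2 * ‖w‖) * ‖w‖ ^ 2 := by positivity
        have h3 : 0 < A θ₀ := by linarith
        rw [hA] at h3
        simp only at h3
        have h4 := hφpos θ₀
        by_contra h5
        push_neg at h5
        have h6 : (Real.cos θ₀ * c1 + Real.sin θ₀ * c2) * (φ θ₀)⁻¹ ≤ 0 :=
          mul_nonpos_iff.2 (Or.inr ⟨h5, (inv_pos.2 h4).le⟩)
        rw [div_eq_mul_inv] at h3
        linarith
      have hcder : ∀ θ : ℝ, HasDerivAt (fun t => Real.cos t * c1 + Real.sin t * c2)
          (-Real.sin θ * c1 + Real.cos θ * c2) θ :=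
        fun θ => ((Real.hasDerivAt_cos θ).mul_const c1).add ((Real.hasDerivAt_sin θ).mul_const c2)
      have hAder : ∀ θ, DifferentiableAt ℝ φ θ → HasDerivAt A
          (((-Real.sin θ * c1 + Real.cos θ * c2) * φ θ
            - (Real.cos θ * c1 + Real.sin θ * c2) * deriv φ θ) / (φ θ) ^ 2) θ :=
        fun θ hdθ => (hcder θ).div hdθ.hasDerivAt (hφpos θ).ne'
      have hloc₀ : deriv A θ₀ = 0 := by
        apply IsLocalMax.deriv_eq_zero
        exact Filter.Eventually.of_forall hmax
      have hloc₁ : deriv A (θ₀ + π) = 0 := by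
        apply IsLocalMin.deriv_eq_zero
        exact Filter.Eventually.of_forall hmin
      have heq₀ : (-Real.sin θ₀ * c1 + Real.cos θ₀ * c2) * φ θ₀
          - (Real.cos θ₀ * c1 + Real.sin θ₀ * c2) * deriv φ θ₀ = 0 := by
        have h := (hAder θ₀ hd₀).deriv
        rw [hloc₀] at h
        have h2 := (div_eq_zero_iff.1 h.symm)
        rcases h2 with h2 | h2
        · exact h2
        · exact absurd h2 (pow_ne_zero 2 (hφpos θ₀).ne')
      have heq₁ : (Real.sin θ₀ * c1 - Real.cos θ₀ * c2) * φ (θ₀ + π)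
          + (Real.cos θ₀ * c1 + Real.sin θ₀ * c2) * deriv φ (θ₀ + π) = 0 := by
        have h := (hAder (θ₀ + π) hd₁).deriv
        rw [hloc₁] at h
        have h2 := (div_eq_zero_iff.1 h.symm)
        rcases h2 with h2 | h2
        · rw [Real.cos_add_pi, Real.sin_add_pi] at h2
          linarith [h2]
        · exact absurd h2 (pow_ne_zero 2 (hφpos (θ₀ + π)).ne')
      -- combine the two stationarity equations
      have hfin : (Real.cos θ₀ * c1 + Real.sin θ₀ * c2) * (deriv φ (θ₀ + π) * φ θ₀)
          = (Real.cos θ₀ * c1 + Real.sin θ₀ * c2) * (φ (θ₀ + π) * deriv φ θ₀) := by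
        linear_combination φ θ₀ * heq₁ + φ (θ₀ + π) * heq₀
      exact mul_left_cancel₀ hwpos.ne' hfin
    -- the ratio function is Lipschitz with a.e. zero derivative, hence constant
    set m : ℝ := ‖u‖ / R with hm
    set M : ℝ := ‖u‖ / ε with hM
    set Cφ : ℝ := 2 * ‖u‖ / ε with hCφ
    have hm0 : 0 < m := div_pos (norm_pos_iff.2 hu) hR
    have hM0 : 0 < M := div_pos (norm_pos_iff.2 hu) hε
    have hCφ0 : 0 ≤ Cφ := by positivity
    set Rat : ℝ → ℝ := fun θ => φ (θ + π) / φ θ with hRat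
    set CR : ℝ := Cφ / m + M * Cφ / (m * m) with hCR
    have hRatlip : ∀ θ₁ θ₂ : ℝ, |Rat θ₁ - Rat θ₂| ≤ CR * |θ₁ - θ₂| := by
      intro θ₁ θ₂
      have hb1 := hφpos θ₁
      have hb2 := hφpos θ₂
      have he : Rat θ₁ - Rat θ₂ = (φ (θ₁ + π) - φ (θ₂ + π)) / φ θ₁
          + φ (θ₂ + π) * (φ θ₂ - φ θ₁) / (φ θ₁ * φ θ₂) := by
        rw [hRat]
        field_simp
        ring
      have hshift : |(θ₁ + π) - (θ₂ + π)| = |θ₁ - θ₂| := by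
        congr 1
        ring
      have ht1 : |(φ (θ₁ + π) - φ (θ₂ + π)) / φ θ₁| ≤ (Cφ * |θ₁ - θ₂|) / m := by
        rw [abs_div, abs_of_pos hb1]
        apply div_le_div₀ (by positivity) _ hm0 (hφlb θ₁)
        have := hφlip (θ₁ + π) (θ₂ + π)
        rwa [hshift] at this
      have ht2 : |φ (θ₂ + π) * (φ θ₂ - φ θ₁) / (φ θ₁ * φ θ₂)|
          ≤ (M * (Cφ * |θ₁ - θ₂|)) / (m * m) := by
        rw [abs_div, abs_mul, abs_of_pos (hφpos (θ₂ + π)), abs_of_pos (mul_pos hb1 hb2)]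
        apply div_le_div₀ (by positivity) _ (by positivity) (mul_le_mul (hφlb θ₁) (hφlb θ₂) hm0.le (hφpos θ₁).le)
        apply mul_le_mul (hφub (θ₂ + π)) _ (abs_nonneg _) hM0.le
        have := hφlip θ₂ θ₁
        rwa [abs_sub_comm θ₂ θ₁] at this
      calc |Rat θ₁ - Rat θ₂|
          ≤ |(φ (θ₁ + π) - φ (θ₂ + π)) / φ θ₁|
            + |φ (θ₂ + π) * (φ θ₂ - φ θ₁) / (φ θ₁ * φ θ₂)| := by
            rw [he]; exact abs_add_le _ _
        _ ≤ (Cφ * |θ₁ - θ₂|) / m + (M * (Cφ * |θ₁ - θ₂|)) / (m * m) := add_le_add ht1 ht2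
        _ = CR * |θ₁ - θ₂| := by rw [hCR]; field_simp
    have hCR0 : 0 ≤ CR := by positivity
    have hRatlipW : LipschitzWith CR.toNNReal Rat := lipschitzWith_of_abs_le hCR0 hRatlip
    have hae : ∀ᵐ θ, HasDerivAt Rat 0 θ := by
      filter_upwards [hφdiff, hφdiff'] with θ h0 h1
      have hshift : HasDerivAt (fun t : ℝ => φ (t + π)) (deriv φ (θ + π)) θ := by
        have h2 := (h1.hasDerivAt).comp θ ((hasDerivAt_id θ).add_const π)
        rw [mul_one] at h2; exact h2
      have hdd : HasDerivAt Rat ((deriv φ (θ + π) * φ θ - φ (θ + π) * deriv φ θ) / (φ θ) ^ 2) θ :=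
        hshift.div h0.hasDerivAt (hφpos θ).ne'
      have hkey := key θ h0 h1
      have hzero : (deriv φ (θ + π) * φ θ - φ (θ + π) * deriv φ θ) / (φ θ) ^ 2 = 0 := by
        rw [hkey]
        simp
      rwa [hzero] at hdd
    have hconst := eq_of_lipschitz_ae_deriv_zero hRatlipW hae 0 π
    have hU0 : U 0 = u := by simp [hUdef]
    have hUπ : U π = -u := by
      have h2 : U π = U (0 + π) := by norm_num
      rw [h2, hUpi 0, hU0]
    have hUππ : U (π + π) = u := by
      rw [hUpi π, hUπ, neg_neg]
    have hgneg : 0 < gauge L (-u) := hg_pos _ (neg_ne_zero.2 hu)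
    have hgpos' : 0 < gauge L u := hg_pos _ hu
    have hc : gauge L (-u) / gauge L u = gauge L u / gauge L (-u) := by
      have h0' : φ (0 + π) = gauge L (-u) := by
        rw [zero_add, hφdef]
        simp only
        rw [hUπ]
      have h1' : φ 0 = gauge L u := by
        rw [hφdef]
        simp only
        rw [hU0]
      have h2' : φ (π + π) = gauge L u := by
        rw [hφdef]
        simp only
        rw [hUππ]
      have h3' : φ π = gauge L (-u) := by
        rw [hφdef]
        simp only
        rw [hUπ]
      rw [hRat] at hconst
      simp only at hconst
      rw [h0', h1', h2', h3'] at hconst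
      exact hconst
    have hsq : gauge L (-u) ^ 2 = gauge L u ^ 2 := by
      rw [div_eq_div_iff hgpos'.ne' hgneg.ne'] at hc
      linear_combination hc
    rw [← Real.sqrt_sq hgneg.le, hsq, Real.sqrt_sq hgpos'.le]
  -- wrap up
  intro z
  have hsym : ∀ x : EuclideanSpace ℝ (Fin n), gauge L (-x) = gauge L x := by
    intro x
    rcases eq_or_ne x 0 with rfl | hx
    · simp
    · exact main x hx
  have h1 : z ∈ K ↔ (z - q) ∈ L := by rw [hmemL]; rw [add_sub_cancel]
  have h2 : q + (q - z) ∈ K ↔ (q - z) ∈ L := (hmemL (q - z)).symm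
  rw [h1, h2, hmem_iff, hmem_iff, ← hsym (z - q), neg_sub]
end

section
/- Let K, L ⊂ ℝ^n (n ≥ 3) be convex bodies with L ⊂ int K, and suppose that for every x ∈ ∂K there exists a hyperplane Π with S(L,x) ∩ L ⊂ Π. Then L is strictly convex, i.e., ∂L contains no line segment. -/
open scoped RealInnerProductSpace

variable {n : ℕ}

/-- a supporting functional bound extends from the interior to the whole convex set -/
lemma aux_le_on {L : Set (EuclideanSpace ℝ (Fin n))} (hLconv : Convex ℝ L)
    {p₀ : EuclideanSpace ℝ (Fin n)} (hp₀ : p₀ ∈ interior L)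
    (f : EuclideanSpace ℝ (Fin n) →L[ℝ] ℝ) {r : ℝ}
    (h : ∀ z ∈ interior L, f z < r) : ∀ y ∈ L, f y ≤ r := by
  intro y hy
  by_contra hlt
  push_neg at hlt
  -- for t ∈ (0,1], t • p₀ + (1-t) • y ∈ interior L
  have key : ∀ t : ℝ, 0 < t → t ≤ 1 → t * f p₀ + (1 - t) * f y < r := by
    intro t ht ht1
    have hmem : t • p₀ + (1 - t) • y ∈ interior L :=
      hLconv.combo_interior_self_mem_interior hp₀ hy ht (by linarith) (by ring)
    have := h _ hmem
    simpa [map_add, map_smul] using this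
  -- choose t small
  set δ := (f y - r) / (|f y - f p₀| + 1) with hδ
  have hδpos : 0 < δ := by
    apply div_pos (by linarith)
    positivity
  have hδ1 : δ ≤ 1 ∨ 1 < δ := le_or_gt δ 1
  rcases hδ1 with h1 | h1
  · have := key δ hδpos h1
    have habs : δ * (f y - f p₀) ≤ δ * |f y - f p₀| :=
      mul_le_mul_of_nonneg_left (le_abs_self _) hδpos.le
    have hδb : δ * (|f y - f p₀| + 1) = f y - r := by
      rw [hδ]; exact div_mul_cancel₀ _ (by positivity)
    nlinarith [abs_nonneg (f y - f p₀)]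
  · have := key 1 one_pos le_rfl
    have habs : (1:ℝ) * (|f y - f p₀| + 1) < f y - r := by
      calc (1:ℝ) * (|f y - f p₀| + 1) < δ * (|f y - f p₀| + 1) := by
            apply mul_lt_mul_of_pos_right h1; positivity
        _ = f y - r := by rw [hδ]; exact div_mul_cancel₀ _ (by positivity)
    nlinarith [abs_nonneg (f y - f p₀), le_abs_self (f y - f p₀), neg_abs_le (f y - f p₀)]

lemma subset_coneGen {L : Set (EuclideanSpace ℝ (Fin n))} (x : EuclideanSpace ℝ (Fin n)) :
    L ⊆ coneGen L x := by
  intro z hz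
  exact ⟨z, hz, 1, zero_le_one, by simp⟩

/-- interior points of the cone lie on rays through interior points of `L` -/
lemma interior_coneGen_ray {L : Set (EuclideanSpace ℝ (Fin n))} (hLconv : Convex ℝ L)
    {p₀ : EuclideanSpace ℝ (Fin n)} (hp₀ : p₀ ∈ interior L)
    {x z : EuclideanSpace ℝ (Fin n)} (hz : z ∈ interior (coneGen L x)) :
    ∃ y' ∈ interior L, ∃ μ : ℝ, 0 < μ ∧ z = x + μ • (y' - x) := by
  -- push z slightly away from p₀, staying in the cone
  have hcont : Continuous fun t : ℝ => z + t • (z - p₀) := by continuity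
  have hnhds : (fun t : ℝ => z + t • (z - p₀)) ⁻¹' interior (coneGen L x) ∈ nhds (0:ℝ) := by
    apply hcont.continuousAt.preimage_mem_nhds
    have h0 : z + (0:ℝ) • (z - p₀) = z := by simp
    rw [h0]
    exact (isOpen_interior).mem_nhds hz
  obtain ⟨ε, hε, hball⟩ := Metric.mem_nhds_iff.mp hnhds
  set t := ε / 2 with htdef
  have ht : 0 < t := by positivity
  have htmem : z + t • (z - p₀) ∈ coneGen L x := by
    apply interior_subset
    apply hball
    have : |t| < ε := by rw [abs_of_pos ht]; linarith
    simpa [Metric.mem_ball, Real.dist_eq] using this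
  obtain ⟨y, hy, l, hl, hdec⟩ := htmem
  have h3 : (1+t) • z = x + l • (y - x) + t • p₀ := by
    calc (1+t) • z = (z + t • (z - p₀)) + t • p₀ := by module
    _ = x + l • (y - x) + t • p₀ := by rw [hdec]
  have hkey : (1+t) • (z - x) = l • (y - x) + t • (p₀ - x) := by
    calc (1+t) • (z - x) = (1+t) • z - (1+t) • x := by module
    _ = x + l • (y - x) + t • p₀ - (1+t) • x := by rw [h3]
    _ = l • (y - x) + t • (p₀ - x) := by module
  have hlt : 0 < l + t := by linarith
  set μ := (l+t)/(1+t) with hμdef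
  have hμ : 0 < μ := by positivity
  set y' := x + μ⁻¹ • (z - x) with hy'def
  have h4 : (l+t) • (y' - x) = (1+t) • (z - x) := by
    have hyx : y' - x = μ⁻¹ • (z - x) := by simp [hy'def]
    rw [hyx, smul_smul]
    congr 1
    field_simp [hμdef]
    rw [hμdef, div_mul_cancel₀ _ (ne_of_gt (by linarith))]
  have h5 : (l+t) • y' = l • y + t • p₀ := by
    rw [hkey] at h4
    calc (l+t) • y' = (l+t) • (y' - x) + (l+t) • x := by module
    _ = (l • (y - x) + t • (p₀ - x)) + (l+t) • x := by rw [h4]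
    _ = l • y + t • p₀ := by module
  have hy'eq : y' = (l/(l+t)) • y + (t/(l+t)) • p₀ := by
    have h6 := congrArg (fun v : EuclideanSpace ℝ (Fin n) => (l+t)⁻¹ • v) h5
    simp only [smul_add, smul_smul] at h6
    rw [inv_mul_cancel₀ hlt.ne', one_smul] at h6
    rw [h6]
    congr 1 <;> rw [inv_mul_eq_div]
  have hy'int : y' ∈ interior L := by
    rw [hy'eq]
    exact hLconv.combo_closure_interior_mem_interior (subset_closure hy) hp₀
      (by positivity) (by positivity) (by field_simp)
  refine ⟨y', hy'int, μ, hμ, ?_⟩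
  rw [hy'def]
  have : μ • (μ⁻¹ • (z - x)) = z - x := by
    rw [smul_smul, mul_inv_cancel₀ hμ.ne', one_smul]
  rw [add_sub_cancel_left, this]
  abel

/-- key step: if every point of `L` outside the interior of the cone satisfies
`⟪z - x, w⟫ = 0`, and some `a ∈ L` satisfies it too, then `⟪z - x, w⟫ ≤ 0` on all of `L`. -/
lemma key_lemma {L : Set (EuclideanSpace ℝ (Fin n))} (hLcomp : IsCompact L)
    (hLconv : Convex ℝ L) {p₀ : EuclideanSpace ℝ (Fin n)} (hp₀ : p₀ ∈ interior L)
    {x : EuclideanSpace ℝ (Fin n)} (fs : EuclideanSpace ℝ (Fin n) →L[ℝ] ℝ)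
    (hfs : ∀ y ∈ L, fs y < fs x) {w : EuclideanSpace ℝ (Fin n)}
    {a : EuclideanSpace ℝ (Fin n)} (ha : a ∈ L) (haw : ⟪a - x, w⟫ = 0)
    (hS : ∀ z ∈ L, z ∉ interior (coneGen L x) → ⟪z - x, w⟫ = 0) :
    ∀ z ∈ L, ⟪z - x, w⟫ ≤ 0 := by
  set d : EuclideanSpace ℝ (Fin n) → ℝ := fun z => fs x - fs z with hd
  have hdpos : ∀ z ∈ L, 0 < d z := fun z hz => by simp [hd]; exact hfs z hz
  set F : EuclideanSpace ℝ (Fin n) → ℝ := fun z => ⟪z - x, w⟫ / d z with hF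
  have hFcont : ContinuousOn F L := by
    apply ContinuousOn.div
    · exact Continuous.continuousOn
        (Continuous.inner (continuous_id.sub continuous_const) continuous_const)
    · exact Continuous.continuousOn (continuous_const.sub fs.continuous)
    · exact fun z hz => (hdpos z hz).ne'
  obtain ⟨zs, hzs, hmax⟩ := hLcomp.exists_isMaxOn ⟨a, ha⟩ hFcont
  set M := F zs with hM
  have hle : ∀ z ∈ L, ⟪z - x, w⟫ ≤ M * d z := by
    intro z hz
    have h : ⟪z - x, w⟫ / d z ≤ M := hmax hz
    exact (div_le_iff₀ (hdpos z hz)).mp h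
  have hM0 : M ≤ 0 → ∀ z ∈ L, ⟪z - x, w⟫ ≤ 0 := by
    intro hM0 z hz
    have := hle z hz
    nlinarith [hdpos z hz]
  by_cases hint : zs ∈ interior (coneGen L x)
  · -- zs = x + μ • (y' - x) with y' interior
    obtain ⟨y', hy', μ, hμ, hzseq⟩ := interior_coneGen_ray hLconv hp₀ hint
    have hzsx : zs - x = μ • (y' - x) := by rw [hzseq]; abel
    have hFy' : F zs = F y' := by
      rw [hF]
      simp only
      rw [hzsx, real_inner_smul_left]
      have hdzs : d zs = μ * d y' := by
        simp only [hd, hzseq, map_add, map_smul, map_sub, smul_eq_mul]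
        ring
      rw [hdzs]
      rw [mul_div_mul_left _ _ hμ.ne']
    -- equality of the affine bound at the interior point y'
    have hy'L : y' ∈ L := interior_subset hy'
    have heq : ⟪y' - x, w⟫ = M * d y' := by
      have h2 : ⟪y' - x, w⟫ / d y' = M := hFy'.symm
      rw [div_eq_iff (hdpos y' hy'L).ne'] at h2
      exact h2
    -- linear functional Λ v = ⟪v,w⟫ + M * fs v vanishes near 0
    obtain ⟨ε, hε, hball⟩ := Metric.mem_nhds_iff.mp (isOpen_interior.mem_nhds hy')
    have hΛ : ∀ v : EuclideanSpace ℝ (Fin n), ‖v‖ < ε → ⟪v, w⟫ + M * fs v ≤ 0 := by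
      intro v hv
      have hmem : y' + v ∈ L := interior_subset (hball (by
        simpa [Metric.mem_ball, dist_eq_norm] using hv))
      have := hle _ hmem
      have hexp : ⟪y' + v - x, w⟫ = ⟪y' - x, w⟫ + ⟪v, w⟫ := by
        rw [show y' + v - x = (y' - x) + v by abel, inner_add_left]
      have hdexp : d (y' + v) = d y' - fs v := by simp [hd, map_add]; ring
      rw [hexp, hdexp, heq] at this
      nlinarith
    have hΛ0 : ∀ v : EuclideanSpace ℝ (Fin n), ⟪v, w⟫ + M * fs v = 0 := by
      intro v
      set c := ε / (2 * (‖v‖ + 1)) with hcdef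
      have hc : 0 < c := by positivity
      have hnorm : ‖c • v‖ < ε := by
        rw [norm_smul, Real.norm_eq_abs, abs_of_pos hc, hcdef]
        rw [div_mul_eq_mul_div, div_lt_iff₀ (by positivity)]
        nlinarith [norm_nonneg v]
      have h1 := hΛ (c • v) hnorm
      have h2 := hΛ (-(c • v)) (by rw [norm_neg]; exact hnorm)
      rw [real_inner_smul_left, map_smul, smul_eq_mul] at h1
      rw [inner_neg_left, real_inner_smul_left, map_neg, map_smul, smul_eq_mul] at h2
      have e1 : c * (⟪v, w⟫ + M * fs v) = c * ⟪v, w⟫ + M * (c * fs v) := by ring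
      have e2 : -(c * (⟪v, w⟫ + M * fs v)) = -(c * ⟪v, w⟫) + M * -(c * fs v) := by ring
      have h3 : ⟪v, w⟫ + M * fs v ≤ 0 := by nlinarith
      have h4 : 0 ≤ ⟪v, w⟫ + M * fs v := by nlinarith
      linarith
    -- evaluate at a - x : M * fs (a-x) = 0 with fs(a-x) < 0 ⇒ M = 0
    have hMa := hΛ0 (a - x)
    rw [haw, zero_add] at hMa
    have hfsa : fs (a - x) < 0 := by
      have := hfs a ha; simp [map_sub]; linarith
    have : M = 0 := by
      rcases mul_eq_zero.mp hMa with h | h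
      · exact h
      · exact absurd h hfsa.ne
    exact hM0 this.le
  · -- zs is on the support cone, so M = 0
    have hz0 := hS zs hzs hint
    have hMz : M = 0 := by
      show ⟪zs - x, w⟫ / d zs = 0
      rw [hz0, zero_div]
    exact hM0 hMz.le

set_option maxHeartbeats 2000000 in
/-- if `K, L` are convex bodies in `ℝⁿ` (`n ≥ 3`) with `L ⊆ int K` and for
every `x ∈ ∂K` the set `S(L,x) ∩ L` lies in a hyperplane, then `L` is strictly convex. -/
theorem stmt_10 {n : ℕ} (hn : 3 ≤ n)
    (K L : Set (EuclideanSpace ℝ (Fin n)))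
    (hKcomp : IsCompact K) (hKconv : Convex ℝ K) (hKint : (interior K).Nonempty)
    (hLcomp : IsCompact L) (hLconv : Convex ℝ L) (hLint : (interior L).Nonempty)
    (hsub : L ⊆ interior K)
    (hyp : ∀ x ∈ frontier K, ∃ w : EuclideanSpace ℝ (Fin n), w ≠ 0 ∧ ∃ c : ℝ,
      supportCone L x ∩ L ⊆ {z | ⟪z, w⟫ = c}) :
    StrictConvex ℝ L := by
  intro a ha b hb hab α β hα hβ hαβ
  by_contra hm
  obtain ⟨p₀, hp₀⟩ := hLint
  set m := α • a + β • b with hmdef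
  have hmL : m ∈ L := hLconv ha hb hα.le hβ.le hαβ
  -- supporting functional at m
  obtain ⟨f, hf⟩ := geometric_hahn_banach_open_point (hLconv.interior) isOpen_interior hm
  have hfle : ∀ y ∈ L, f y ≤ f m := aux_le_on hLconv hp₀ f hf
  have hfm : f m = α * f a + β * f b := by
    simp [hmdef, map_add, map_smul]
  have h5 : α * f m + β * f m = f m := by linear_combination f m * hαβ
  have hfa : f a = f m := by
    by_contra hne
    have h1 : f a < f m := lt_of_le_of_ne (hfle a ha) hne
    have h2 : f b ≤ f m := hfle b hb
    linarith [mul_lt_mul_of_pos_left h1 hα, mul_le_mul_of_nonneg_left h2 hβ.le, hfm, h5]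
  have hfb : f b = f m := by
    rw [hfa] at hfm
    have h4 : β * f b = β * f m := by linear_combination -hfm - f m * hαβ
    exact mul_left_cancel₀ hβ.ne' h4
  have hfp₀ : f p₀ < f m := hf p₀ hp₀
  set v := m - p₀ with hvdef
  have hfv : 0 < f v := by simp [hvdef, map_sub]; linarith
  -- construct x on the frontier of K along the ray from a through b
  set g : ℝ → EuclideanSpace ℝ (Fin n) := fun t => b + t • (b - a) with hgdef
  set S : Set ℝ := {t : ℝ | 0 ≤ t ∧ g t ∈ K} with hSdef
  have hgcont : Continuous g := by
    rw [hgdef]; exact continuous_const.add (continuous_id.smul continuous_const)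
  have hS0 : (0:ℝ) ∈ S := ⟨le_refl 0, by
    have : g 0 = b := by rw [hgdef]; simp
    rw [this]; exact interior_subset (hsub hb)⟩
  have hSclosed : IsClosed S := by
    have hSeq : S = Set.Ici (0:ℝ) ∩ g ⁻¹' K := by
      ext t; simp [hSdef, Set.mem_Ici]
    rw [hSeq]
    exact isClosed_Ici.inter (IsClosed.preimage hgcont hKcomp.isClosed)
  have hSbdd : BddAbove S := by
    obtain ⟨R, hR⟩ := hKcomp.isBounded.exists_norm_le
    refine ⟨(R + ‖b‖) / ‖b - a‖, fun t ht => ?_⟩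
    have hba : 0 < ‖b - a‖ := by
      rw [norm_pos_iff]; exact sub_ne_zero.mpr (fun h => hab h.symm) 
    have h1 : ‖g t‖ ≤ R := hR _ ht.2
    have h2 : t * ‖b - a‖ - ‖b‖ ≤ ‖g t‖ := by
      have := norm_add_le b (t • (b - a))
      have h3 : ‖t • (b - a)‖ ≤ ‖g t‖ + ‖b‖ := by
        have := norm_le_add_norm_add (t • (b - a)) b
        calc ‖t • (b - a)‖ ≤ ‖t • (b - a) + b‖ + ‖b‖ := this
          _ = ‖g t‖ + ‖b‖ := by rw [hgdef]; simp; rw [add_comm]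
      rw [norm_smul, Real.norm_eq_abs] at h3
      nlinarith [le_abs_self t, ht.1, abs_nonneg t]
    rw [le_div_iff₀ hba]
    nlinarith
  set T := sSup S with hTdef
  have hTS : T ∈ S := hSclosed.csSup_mem ⟨0, hS0⟩ hSbdd
  set x := g T with hxdef
  have hxK : x ∈ K := hTS.2
  have hxint : x ∉ interior K := by
    intro hxint
    obtain ⟨ε, hε, hball⟩ := Metric.mem_nhds_iff.mp (isOpen_interior.mem_nhds hxint)
    have hba : 0 < ‖b - a‖ := by
      rw [norm_pos_iff]; exact sub_ne_zero.mpr (fun h => hab h.symm)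
    set t' := T + ε / (2 * ‖b - a‖) with ht'def
    have ht'S : t' ∈ S := by
      constructor
      · have := hTS.1; rw [ht'def]; positivity
      · apply interior_subset
        apply hball
        rw [Metric.mem_ball, dist_eq_norm]
        have : g t' - x = (ε / (2 * ‖b - a‖)) • (b - a) := by
          rw [hxdef, hgdef, ht'def]
          simp only
          rw [add_smul]
          abel
        rw [this, norm_smul, Real.norm_eq_abs, abs_of_pos (by positivity)]
        rw [div_mul_eq_mul_div, div_lt_iff₀ (by positivity)]
        nlinarith
    have := le_csSup hSbdd ht'S
    rw [ht'def] at this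
    have : ε / (2 * ‖b - a‖) ≤ 0 := by linarith [this]
    nlinarith [div_pos hε (by positivity : (0:ℝ) < 2 * ‖b - a‖)]
  have hxfr : x ∈ frontier K := by
    rw [frontier, hKcomp.isClosed.closure_eq]
    exact ⟨hxK, hxint⟩
  have hxL : x ∉ L := fun h => hxint (hsub h)
  have hfx : f x = f m := by
    rw [hxdef, hgdef]
    simp only [map_add, map_smul, map_sub, smul_eq_mul]
    rw [hfa, hfb]; ring
  -- the hyperplane at x
  obtain ⟨w, hw0, c, hPi⟩ := hyp x hxfr
  -- cone bound
  have hCb : ∀ z ∈ coneGen L x, f z ≤ f x := by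
    rintro z ⟨y, hy, l, hl, rfl⟩
    simp only [map_add, map_smul, map_sub, smul_eq_mul]
    have := hfle y hy
    nlinarith [hfle y hy, hfx]
  have hnotint : ∀ z : EuclideanSpace ℝ (Fin n), f z = f x → z ∉ interior (coneGen L x) := by
    intro z hfz hzint
    obtain ⟨ε, hε, hball⟩ := Metric.mem_nhds_iff.mp (isOpen_interior.mem_nhds hzint)
    have hv0 : v ≠ 0 := fun h => by rw [h] at hfv; simp at hfv
    have hvn : 0 < ‖v‖ := norm_pos_iff.mpr hv0
    set z' := z + (ε / (2 * ‖v‖)) • v with hz'def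
    have hz'C : z' ∈ coneGen L x := by
      apply interior_subset
      apply hball
      rw [Metric.mem_ball, dist_eq_norm]
      have : z' - z = (ε / (2 * ‖v‖)) • v := by rw [hz'def]; abel
      rw [this, norm_smul, Real.norm_eq_abs, abs_of_pos (by positivity)]
      rw [div_mul_eq_mul_div, div_lt_iff₀ (by positivity)]
      nlinarith
    have := hCb z' hz'C
    rw [hz'def, map_add, map_smul, smul_eq_mul, hfz] at this
    nlinarith [div_pos hε (by positivity : (0:ℝ) < 2 * ‖v‖)]
  have hLC : L ⊆ coneGen L x := subset_coneGen x
  have hfrontier : ∀ z ∈ L, z ∉ interior (coneGen L x) → z ∈ supportCone L x ∩ L := by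
    intro z hz hni
    exact ⟨⟨subset_closure (hLC hz), hni⟩, hz⟩
  -- a and b are on the support cone
  have haw : ⟪a, w⟫ = c := hPi (hfrontier a ha (hnotint a (by rw [hfa, hfx])))
  have hbw : ⟪b, w⟫ = c := hPi (hfrontier b hb (hnotint b (by rw [hfb, hfx])))
  have hxw : ⟪x, w⟫ = c := by
    rw [hxdef, hgdef]
    simp only
    rw [inner_add_left, real_inner_smul_left, inner_sub_left, haw, hbw]
    ring
  -- points of L off the interior of the cone satisfy the hyperplane eq rel x
  have hSzero : ∀ z ∈ L, z ∉ interior (coneGen L x) → ⟪z - x, w⟫ = 0 := by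
    intro z hz hni
    rw [inner_sub_left, hPi (hfrontier z hz hni), hxw, sub_self]
  have hSzero' : ∀ z ∈ L, z ∉ interior (coneGen L x) → ⟪z - x, -w⟫ = 0 := by
    intro z hz hni
    rw [inner_neg_right, hSzero z hz hni, neg_zero]
  -- separating functional
  obtain ⟨fs, u, hfsL, hfsu⟩ :=
    geometric_hahn_banach_closed_point hLconv hLcomp.isClosed hxL
  have hfs : ∀ y ∈ L, fs y < fs x := fun y hy => lt_trans (hfsL y hy) hfsu
  have hawx : ⟪a - x, w⟫ = 0 := by rw [inner_sub_left, haw, hxw, sub_self]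
  have hawx' : ⟪a - x, -w⟫ = 0 := by rw [inner_neg_right, hawx, neg_zero]
  have hle1 := key_lemma hLcomp hLconv hp₀ fs hfs ha hawx hSzero
  have hle2 := key_lemma hLcomp hLconv hp₀ fs hfs ha hawx' hSzero'
  have hzero : ∀ z ∈ L, ⟪z - x, w⟫ = 0 := by
    intro z hz
    have h1 := hle1 z hz
    have h2 := hle2 z hz
    rw [inner_neg_right] at h2
    linarith
  -- conclude w = 0
  apply hw0
  obtain ⟨ε, hε, hball⟩ := Metric.mem_nhds_iff.mp (isOpen_interior.mem_nhds hp₀)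
  set cw := ε / (2 * (‖w‖ + 1)) with hcwdef
  have hcw : 0 < cw := by positivity
  have hpw : p₀ + cw • w ∈ L := by
    apply interior_subset
    apply hball
    rw [Metric.mem_ball, dist_eq_norm]
    have : p₀ + cw • w - p₀ = cw • w := by abel
    rw [this, norm_smul, Real.norm_eq_abs, abs_of_pos hcw, hcwdef]
    rw [div_mul_eq_mul_div, div_lt_iff₀ (by positivity)]
    nlinarith [norm_nonneg w]
  have h1 := hzero _ hpw
  have h2 := hzero p₀ (interior_subset hp₀)
  have : ⟪p₀ + cw • w - x, w⟫ = ⟪p₀ - x, w⟫ + cw * ⟪w, w⟫ := by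
    rw [show p₀ + cw • w - x = (p₀ - x) + cw • w by abel, inner_add_left,
      real_inner_smul_left]
  rw [this, h2, zero_add] at h1
  have hww : ⟪w, w⟫ = 0 := by
    rcases mul_eq_zero.mp h1 with h | h
    · exact absurd h hcw.ne'
    · exact h
  exact inner_self_eq_zero.mp hww
end

section
/- Let K ⊂ ℝ^(2k+1) be a convex body contained in the interior of the unit ball, with 0 ∈ int K. Then the map α : S^(2k) → (space of convex bodies with Hausdorff metric) defined by α(x) = C(K,x) ∩ x^⊥ is continuous: if x_r → x in S^(2k), then C(K,x_r) ∩ x_r^⊥ → C(K,x) ∩ x^⊥ in the Hausdorff metric. -/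
open scoped RealInnerProductSpace

noncomputable def projMap {n : ℕ} (x y : EuclideanSpace ℝ (Fin n)) :
    EuclideanSpace ℝ (Fin n) :=
  (1 - ⟪y, x⟫)⁻¹ • (y - ⟪y, x⟫ • x)

lemma inner_lt_one {n : ℕ} {x y : EuclideanSpace ℝ (Fin n)}
    (hx : ‖x‖ = 1) (hy : ‖y‖ < 1) : ⟪y, x⟫ < 1 := by
  calc ⟪y, x⟫ ≤ ‖y‖ * ‖x‖ := real_inner_le_norm y x
    _ = ‖y‖ := by rw [hx, mul_one]
    _ < 1 := hy

lemma coneGen_inter_eq {n : ℕ} {K : Set (EuclideanSpace ℝ (Fin n))}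
    {x : EuclideanSpace ℝ (Fin n)} (hx : ‖x‖ = 1)
    (hK : K ⊆ Metric.ball 0 1) :
    coneGen K x ∩ {z | ⟪z, x⟫ = 0} = (fun y => projMap x y) '' K := by
  have hxx : ⟪x, x⟫ = 1 := by
    rw [real_inner_self_eq_norm_sq, hx]; norm_num
  ext z
  constructor
  · rintro ⟨⟨y, hy, l, hl, rfl⟩, hz⟩
    have hyn : ‖y‖ < 1 := by simpa using hK hy
    have ht : ⟪y, x⟫ < 1 := inner_lt_one hx hyn
    have h1t : (0:ℝ) < 1 - ⟪y, x⟫ := by linarith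
    simp only [Set.mem_setOf_eq, inner_add_left, inner_smul_left, inner_sub_left, hxx,
      RCLike.star_def, starRingEnd_apply, star_trivial] at hz
    have hl' : l = (1 - ⟪y, x⟫)⁻¹ := by
      have h2 : (1 - ⟪y, x⟫) * l = 1 := by linear_combination -hz
      exact eq_inv_of_mul_eq_one_right h2
    refine ⟨y, hy, ?_⟩
    apply smul_right_injective (EuclideanSpace ℝ (Fin n)) h1t.ne'
    simp only [projMap, smul_smul, mul_inv_cancel₀ h1t.ne', one_smul]
    rw [hl', smul_add, smul_smul, mul_inv_cancel₀ h1t.ne', one_smul]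
    module
  · rintro ⟨y, hy, rfl⟩
    have hyn : ‖y‖ < 1 := by simpa using hK hy
    have ht : ⟪y, x⟫ < 1 := inner_lt_one hx hyn
    have h1t : (0:ℝ) < 1 - ⟪y, x⟫ := by linarith
    constructor
    · refine ⟨y, hy, (1 - ⟪y, x⟫)⁻¹, le_of_lt (inv_pos.mpr h1t), ?_⟩
      apply smul_right_injective (EuclideanSpace ℝ (Fin n)) h1t.ne'
      simp only [projMap, smul_smul, mul_inv_cancel₀ h1t.ne', one_smul]
      rw [smul_add, smul_smul, mul_inv_cancel₀ h1t.ne', one_smul]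
      module
    · simp only [Set.mem_setOf_eq, projMap, inner_smul_left, inner_sub_left, hxx,
        RCLike.star_def, starRingEnd_apply, star_trivial]
      simp [mul_one]

lemma continuousOn_projMap {n : ℕ} :
    ContinuousOn (fun p : EuclideanSpace ℝ (Fin n) × EuclideanSpace ℝ (Fin n) =>
      projMap p.1 p.2) {p | ⟪p.2, p.1⟫ ≠ (1:ℝ)} := by
  have hinner : Continuous (fun p : EuclideanSpace ℝ (Fin n) × EuclideanSpace ℝ (Fin n) =>
      (⟪p.2, p.1⟫ : ℝ)) := by
    exact continuous_inner.comp (continuous_snd.prodMk continuous_fst)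
  apply ContinuousOn.smul (f := fun p : EuclideanSpace ℝ (Fin n) × EuclideanSpace ℝ (Fin n) => (1 - ⟪p.2, p.1⟫)⁻¹)
    (g := fun p : EuclideanSpace ℝ (Fin n) × EuclideanSpace ℝ (Fin n) => p.2 - ⟪p.2, p.1⟫ • p.1)
  · exact ((continuousOn_const.sub hinner.continuousOn).inv₀
      (fun p hp => sub_ne_zero.mpr (Ne.symm hp)))
  · exact continuous_snd.continuousOn.sub
      (hinner.continuousOn.smul continuous_fst.continuousOn)


/-- for a convex body `K` inside the open unit ball of `ℝ^{2k+1}` with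
`0 ∈ int K`, the central projection map `x ↦ C(K,x) ∩ x^⊥` is continuous in the
Hausdorff metric: if `x_r → x` on the sphere then the projections converge. -/
theorem stmt_17 {k : ℕ} (hk : 1 ≤ k)
    (K : Set (EuclideanSpace ℝ (Fin (2 * k + 1))))
    (hKcomp : IsCompact K) (hKconv : Convex ℝ K)
    (h0 : (0 : EuclideanSpace ℝ (Fin (2 * k + 1))) ∈ interior K)
    (hKball : K ⊆ Metric.ball (0 : EuclideanSpace ℝ (Fin (2 * k + 1))) 1)
    (x : EuclideanSpace ℝ (Fin (2 * k + 1)))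
    (hx : x ∈ Metric.sphere (0 : EuclideanSpace ℝ (Fin (2 * k + 1))) 1)
    (xs : ℕ → EuclideanSpace ℝ (Fin (2 * k + 1)))
    (hxs : ∀ r, xs r ∈ Metric.sphere (0 : EuclideanSpace ℝ (Fin (2 * k + 1))) 1)
    (hlim : Filter.Tendsto xs Filter.atTop (nhds x)) :
    Filter.Tendsto
      (fun r => Metric.hausdorffDist
        (coneGen K (xs r) ∩ {z | ⟪z, xs r⟫ = 0})
        (coneGen K x ∩ {z | ⟪z, x⟫ = 0}))
      Filter.atTop (nhds 0) := by
  have hxn : ‖x‖ = 1 := by simpa using hx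
  have hxsn : ∀ r, ‖xs r‖ = 1 := fun r => by simpa using hxs r
  -- the compact set
  set C := Metric.sphere (0:EuclideanSpace ℝ (Fin (2*k+1))) 1 ×ˢ K with hC
  have hCcomp : IsCompact C := (isCompact_sphere 0 1).prod hKcomp
  have hCsub : C ⊆ {p : EuclideanSpace ℝ (Fin (2*k+1)) × EuclideanSpace ℝ (Fin (2*k+1)) | ⟪p.2, p.1⟫ ≠ (1:ℝ)} := by
    rintro ⟨x', y⟩ ⟨hx', hy⟩
    have : ⟪y, x'⟫ < 1 := inner_lt_one (by simpa using hx') (by simpa using hKball hy)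
    exact ne_of_lt this
  have huc : UniformContinuousOn (fun p : EuclideanSpace ℝ (Fin (2*k+1)) × EuclideanSpace ℝ (Fin (2*k+1)) => projMap p.1 p.2) C :=
    hCcomp.uniformContinuousOn_of_continuous (continuousOn_projMap.mono hCsub)
  rw [Metric.tendsto_atTop]
  intro ε hε
  rw [Metric.uniformContinuousOn_iff] at huc
  obtain ⟨δ, hδ, hucd⟩ := huc (ε/2) (by linarith)
  obtain ⟨N, hN⟩ := (Metric.tendsto_atTop.mp hlim) δ hδ
  refine ⟨N, fun r hr => ?_⟩
  have hdr : dist (xs r) x < δ := hN r hr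
  have key : Metric.hausdorffDist
      (coneGen K (xs r) ∩ {z | ⟪z, xs r⟫ = 0})
      (coneGen K x ∩ {z | ⟪z, x⟫ = 0}) ≤ ε/2 := by
    rw [coneGen_inter_eq (hxsn r) hKball, coneGen_inter_eq hxn hKball]
    apply Metric.hausdorffDist_le_of_mem_dist (by linarith)
    · rintro z ⟨y, hy, rfl⟩
      refine ⟨projMap x y, ⟨y, hy, rfl⟩, ?_⟩
      have := hucd (xs r, y) ⟨hxs r, hy⟩ (x, y) ⟨hx, hy⟩
        (by rw [Prod.dist_eq]; simp only [dist_self]; exact max_lt hdr hδ)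
      exact le_of_lt this
    · rintro z ⟨y, hy, rfl⟩
      refine ⟨projMap (xs r) y, ⟨y, hy, rfl⟩, ?_⟩
      have := hucd (x, y) ⟨hx, hy⟩ (xs r, y) ⟨hxs r, hy⟩
        (by rw [Prod.dist_eq]; simp only [dist_self]; exact max_lt (by rwa [dist_comm]) hδ)
      exact le_of_lt this
  rw [Real.dist_eq, sub_zero, abs_of_nonneg Metric.hausdorffDist_nonneg]
  linarith
end
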